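/- arXiv:1108.0133 — 8 statements merged into one kernel-verified Lean document; each statement's English description precedes it below -/
import Mathlib

section
/- For a finite irreducible Markov chain, the function d_G(t) = max_x ‖P_x(X_{Z_t} ∈ ·) − π‖ is non-increasing in t, where Z_t is a geometric random variable of mean t independent of the chain. -/
open scoped BigOperators ENNReal

noncomputable section

/-- Total variation distance between two distributions on a finite set,
as half the `ℓ¹` distance. -/
def tv {S : Type*} [Fintype S] (μ ν : S → ℝ) : ℝ := (1 / 2) * ∑ y, |μ y - ν y|

/-- Law of the chain with transition matrix `P` started at `x`, evaluated at an
independent random time with distribution `T` on ℕ. -/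
def lawAt {S : Type*} [Fintype S] [DecidableEq S] (P : Matrix S S ℝ) (T : ℕ → ℝ)
    (x : S) : S → ℝ :=
  fun y => ∑' n, T n * (P ^ n) x y

/-- The geometric distribution on `{1,2,...}` with mean `t` (success probability `1/t`). -/
def geo (t : ℕ) : ℕ → ℝ :=
  fun n => if n = 0 then 0 else (1 / (t : ℝ)) * (1 - 1 / (t : ℝ)) ^ (n - 1)

/-!
Write `G_p` for the transition matrix of the chain sampled at an independent geometric(p) time.
For `p' ≤ p`, a geometric(p') time is distributed as a geometric(p) time followed, with
probability `1 - p'/p`, by a further independent geometric(p') time; in matrix form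
`G_{p'} = G_p K` with `K = (p'/p) I + (1 - p'/p) G_{p'}`. Since `K` is stochastic and fixes `π`,
row `x` of `G_{p'}` minus `π` is (row `x` of `G_p` minus `π`) times `K`, and multiplying by a
stochastic matrix does not increase total variation.
-/

open Matrix

section

variable {S : Type*} [Fintype S] [DecidableEq S]

lemma tv_vecMul_le {K : Matrix S S ℝ} (hK : K ∈ rowStochastic ℝ S) (μ ν : S → ℝ) :
    tv (μ ᵥ* K) (ν ᵥ* K) ≤ tv μ ν := by
  unfold tv
  gcongr (1 / 2) * ?_
  calc ∑ y, |(μ ᵥ* K) y - (ν ᵥ* K) y|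
      = ∑ y, |∑ z, (μ z - ν z) * K z y| := by
        simp only [vecMul, dotProduct, ← Finset.sum_sub_distrib, sub_mul]
    _ ≤ ∑ y, ∑ z, |μ z - ν z| * K z y := by
        gcongr with y
        refine (Finset.abs_sum_le_sum_abs _ _).trans_eq (Finset.sum_congr rfl fun z _ => ?_)
        rw [abs_mul, abs_of_nonneg (nonneg_of_mem_rowStochastic hK)]
    _ = ∑ z, |μ z - ν z| := by
        rw [Finset.sum_comm]
        simp only [← Finset.mul_sum, sum_row_of_mem_rowStochastic hK, mul_one]

/-- `p P (1 - (1 - p) P)⁻¹ = ∑_{n ≥ 1} p (1 - p)^(n - 1) Pⁿ`, the geometric(p)-time kernel. -/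
def geoKernel (P : Matrix S S ℝ) (p : ℝ) : Matrix S S ℝ :=
  p • P * ∑' n, ((1 - p) • P) ^ n

variable {P : Matrix S S ℝ} {p : ℝ}

lemma summable_one_sub_smul_pow (hP : P ∈ rowStochastic ℝ S) (hp0 : 0 < p) (hp1 : p ≤ 1) :
    Summable fun n => ((1 - p) • P) ^ n := by
  have hq0 : 0 ≤ 1 - p := sub_nonneg.mpr hp1
  refine Pi.summable.mpr fun x => Pi.summable.mpr fun y => ?_
  have hPn := Submonoid.pow_mem _ hP
  refine (summable_geometric_of_lt_one hq0 (sub_lt_self 1 hp0)).of_nonneg_of_le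
    (fun n => ?_) (fun n => ?_)
  · simpa [smul_pow] using mul_nonneg (pow_nonneg hq0 n) (nonneg_of_mem_rowStochastic (hPn n))
  · simpa [smul_pow] using mul_le_of_le_one_right (pow_nonneg hq0 n)
      (le_one_of_mem_rowStochastic (hPn n))

lemma hasSum_geoKernel_apply (hP : P ∈ rowStochastic ℝ S) (hp0 : 0 < p) (hp1 : p ≤ 1)
    (x y : S) : HasSum (fun n => p * (1 - p) ^ n * (P ^ (n + 1)) x y) (geoKernel P p x y) := by
  have hsum := (summable_one_sub_smul_pow hP hp0 hp1).hasSum.mul_left (p • P)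
  convert Pi.hasSum.mp (Pi.hasSum.mp hsum x) y using 1
  · funext n
    rw [smul_pow, mul_smul_comm, smul_mul_assoc, ← pow_succ', smul_smul, Matrix.smul_apply,
      smul_eq_mul, mul_comm p]
  · rfl

lemma vecMul_geoKernel (hP : P ∈ rowStochastic ℝ S) (hp0 : 0 < p) (hp1 : p ≤ 1) {π : S → ℝ}
    (hπ : π ᵥ* P = π) : π ᵥ* geoKernel P p = π := by
  have hinv := (summable_one_sub_smul_pow hP hp0 hp1).one_sub_mul_tsum_pow
  have hπ' : π ᵥ* (1 - (1 - p) • P) = p • π := by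
    rw [vecMul_sub, vecMul_one, vecMul_smul, hπ]
    module
  rw [geoKernel, ← vecMul_vecMul, vecMul_smul, hπ, ← hπ', vecMul_vecMul, hinv, vecMul_one]

lemma geoKernel_mulVec (hP : P ∈ rowStochastic ℝ S) (hp0 : 0 < p) (hp1 : p ≤ 1) {v : S → ℝ}
    (hv : P *ᵥ v = v) : geoKernel P p *ᵥ v = v := by
  have hinv := (summable_one_sub_smul_pow hP hp0 hp1).tsum_pow_mul_one_sub
  have hv' : (1 - (1 - p) • P) *ᵥ v = p • v := by
    rw [sub_mulVec, one_mulVec, smul_mulVec, hv]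
    module
  have hRv : (∑' n, ((1 - p) • P) ^ n) *ᵥ (p • v) = v := by
    rw [← hv', mulVec_mulVec, hinv, one_mulVec]
  calc geoKernel P p *ᵥ v = P *ᵥ ((∑' n, ((1 - p) • P) ^ n) *ᵥ (p • v)) := by
        simp only [geoKernel, ← mulVec_mulVec, smul_mulVec, mulVec_smul]
    _ = v := by rw [hRv, hv]

lemma geoKernel_mem_rowStochastic (hP : P ∈ rowStochastic ℝ S) (hp0 : 0 < p) (hp1 : p ≤ 1) :
    geoKernel P p ∈ rowStochastic ℝ S := by
  refine mem_rowStochastic.mpr ⟨fun x y => ?_, geoKernel_mulVec hP hp0 hp1 hP.2⟩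
  exact (hasSum_geoKernel_apply hP hp0 hp1 x y).nonneg fun n =>
    mul_nonneg (mul_nonneg hp0.le (pow_nonneg (sub_nonneg.mpr hp1) n))
      (nonneg_of_mem_rowStochastic (Submonoid.pow_mem _ hP _))

lemma geoKernel_eq_mul (hP : P ∈ rowStochastic ℝ S) {p' : ℝ} (hp'0 : 0 < p') (hp' : p' ≤ p)
    (hp1 : p ≤ 1) :
    geoKernel P p' = geoKernel P p * ((p' / p) • 1 + (1 - p' / p) • geoKernel P p') := by
  have hp0 : 0 < p := hp'0.trans_le hp'
  set s := p' / p
  set R := ∑' n, ((1 - p) • P) ^ n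
  set R' := ∑' n, ((1 - p') • P) ^ n
  have hR : R * (1 - (1 - p) • P) = 1 :=
    (summable_one_sub_smul_pow hP hp0 hp1).tsum_pow_mul_one_sub
  have hR' : (1 - (1 - p') • P) * R' = 1 :=
    (summable_one_sub_smul_pow hP hp'0 (hp'.trans hp1)).one_sub_mul_tsum_pow
  have hsp : s * p = p' := div_mul_cancel₀ p' hp0.ne'
  have hK : s • 1 + (1 - s) • geoKernel P p' = s • (1 - (1 - p) • P) * R' := by
    have hsplit : s • (1 - (1 - p) • P) = s • (1 - (1 - p') • P) + ((1 - s) * p') • P := by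
      rw [← hsp]
      module
    rw [hsplit, add_mul, smul_mul_assoc, hR', geoKernel, smul_mul_assoc, smul_mul_assoc, smul_smul]
  rw [hK]
  calc geoKernel P p' = (p * s) • (P * (R * (1 - (1 - p) • P)) * R') := by
        rw [hR, mul_one, mul_comm, hsp, geoKernel, smul_mul_assoc]
    _ = geoKernel P p * (s • (1 - (1 - p) • P) * R') := by
        simp only [geoKernel, smul_mul_assoc, mul_smul_comm, smul_smul, mul_assoc, mul_comm s, R]

lemma tv_geoKernel_le_of_le (hP : P ∈ rowStochastic ℝ S) {π : S → ℝ} (hπ : π ᵥ* P = π)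
    {p' : ℝ} (hp'0 : 0 < p') (hp' : p' ≤ p) (hp1 : p ≤ 1) (x : S) :
    tv (geoKernel P p' x) π ≤ tv (geoKernel P p x) π := by
  have hp0 : 0 < p := hp'0.trans_le hp'
  set K := (p' / p) • 1 + (1 - p' / p) • geoKernel P p'
  have hK : K ∈ rowStochastic ℝ S :=
    convex_rowStochastic (one_mem _) (geoKernel_mem_rowStochastic hP hp'0 (hp'.trans hp1))
      (div_nonneg hp'0.le hp0.le) (sub_nonneg.mpr (div_le_one_of_le₀ hp' hp0.le)) (by ring)
  have hπK : π ᵥ* K = π := by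
    rw [vecMul_add, vecMul_smul, vecMul_one, vecMul_smul,
      vecMul_geoKernel hP hp'0 (hp'.trans hp1) hπ]
    module
  calc tv (geoKernel P p' x) π = tv (geoKernel P p x ᵥ* K) (π ᵥ* K) := by
        rw [geoKernel_eq_mul hP hp'0 hp' hp1, hπK, mul_apply_eq_vecMul]
    _ ≤ tv (geoKernel P p x) π := tv_vecMul_le hK _ _

lemma lawAt_geo_eq_geoKernel (hP : P ∈ rowStochastic ℝ S) {t : ℕ} (ht : 1 ≤ t) (x : S) :
    lawAt P (geo t) x = geoKernel P (1 / t) x := by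
  have hp0 : (0 : ℝ) < 1 / t := by positivity
  have hp1 : 1 / (t : ℝ) ≤ 1 := div_le_one_of_le₀ (by exact_mod_cast ht) (by positivity)
  funext y
  refine ((hasSum_nat_add_iff' 1).mp ?_).tsum_eq
  simpa [geo] using hasSum_geoKernel_apply hP hp0 hp1 x y

end

theorem claim_dG_mono_general {S : Type*} [Fintype S] [DecidableEq S]
    (P : Matrix S S ℝ) (π : S → ℝ)
    (hP0 : ∀ x y, 0 ≤ P x y) (hP1 : ∀ x, ∑ y, P x y = 1)
    (hπP : ∀ y, ∑ x, π x * P x y = π y)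
    (t : ℕ) (ht : 1 ≤ t) :
    (⨆ x, tv (lawAt P (geo (t + 1)) x) π) ≤ ⨆ x, tv (lawAt P (geo t) x) π := by
  have hP : P ∈ rowStochastic ℝ S := mem_rowStochastic_iff_sum.mpr ⟨hP0, hP1⟩
  have hπ : π ᵥ* P = π := funext hπP
  have ht' : (1 : ℝ) ≤ t := by exact_mod_cast ht
  refine ciSup_mono (Set.finite_range _).bddAbove fun x => ?_
  rw [lawAt_geo_eq_geoKernel hP (by omega), lawAt_geo_eq_geoKernel hP ht]
  exact tv_geoKernel_le_of_le hP hπ (by positivity)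
    (one_div_le_one_div_of_le (by positivity) (by push_cast; linarith))
    (div_le_one_of_le₀ ht' (by positivity)) x

/-- for a finite irreducible Markov chain,
`d_G(t) = max_x ‖ℙ_x(X_{Z_t} ∈ ·) − π‖` is non-increasing in `t`, where `Z_t` is a
geometric time of mean `t` independent of the chain. -/
theorem claim_dG_mono {S : Type*} [Fintype S] [DecidableEq S] [Nonempty S]
    (P : Matrix S S ℝ) (π : S → ℝ)
    (hP0 : ∀ x y, 0 ≤ P x y) (hP1 : ∀ x, ∑ y, P x y = 1)
    (hirr : ∀ x y, ∃ n, 0 < (P ^ n) x y)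
    (hπ0 : ∀ x, 0 ≤ π x) (hπ1 : ∑ x, π x = 1)
    (hπP : ∀ y, ∑ x, π x * P x y = π y)
    (t : ℕ) (ht : 1 ≤ t) :
    (⨆ x, tv (lawAt P (geo (t + 1)) x) π) ≤ ⨆ x, tv (lawAt P (geo t) x) π :=
  claim_dG_mono_general P π hP0 hP1 hπP t ht
end
end

section
/- For every finite irreducible Markov chain, t_G ≤ 4·t_stop + 1, where t_G is the smallest t such that the law of X at an independent geometric time of mean t is within total variation distance 1/4 of stationarity uniformly over starting states, and t_stop is the maximum over starting states x of the minimal expected value of a stopping time Λ with P_x(X_Λ ∈ ·) = π. -/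
open scoped BigOperators ENNReal

noncomputable section

/-- A (randomized) stopping time for the chain with transition matrix `P` started from
distribution `μ`, encoded by the vectors `θ t x = ℙ(X_t = x, S ≥ t)` and
`σ t x = ℙ(X_t = x, S = t)` (Baxter–Chacon / filling-rule representation). -/
structure StoppingRule {S : Type*} [Fintype S] (P : Matrix S S ℝ) (μ : S → ℝ) where
  θ : ℕ → S → ℝ
  σ : ℕ → S → ℝ
  σ_nonneg : ∀ t x, 0 ≤ σ t x
  σ_le : ∀ t x, σ t x ≤ θ t x
  θ_zero : ∀ x, θ 0 x = μ x
  θ_succ : ∀ t y, θ (t + 1) y = ∑ x, (θ t x - σ t x) * P x y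

/-- Expectation of a stopping rule, `E[S] = ∑_t t · ℙ(S = t)`. -/
def stopExp {S : Type*} [Fintype S] {P : Matrix S S ℝ} {μ : S → ℝ}
    (R : StoppingRule P μ) : ℝ≥0∞ :=
  ∑' t : ℕ, (t : ℝ≥0∞) * ENNReal.ofReal (∑ x, R.σ t x)

/-- The stopping rule stops at a state distributed according to `π`. -/
def IsStat {S : Type*} [Fintype S] {P : Matrix S S ℝ} {μ : S → ℝ}
    (R : StoppingRule P μ) (π : S → ℝ) : Prop :=
  ∀ y, ∑' t, R.σ t y = π y

/-- `t_stop`: the maximum over starting states of the minimal expected value of a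
stationary (randomized) stopping time. -/
def tstop {S : Type*} [Fintype S] [DecidableEq S] (P : Matrix S S ℝ) (π : S → ℝ) : ℝ≥0∞ :=
  ⨆ x : S, ⨅ R : {R : StoppingRule P (fun y => if y = x then (1 : ℝ) else 0) // IsStat R π},
    stopExp R.1

section auxlems
variable {S : Type*} [Fintype S] [DecidableEq S]

lemma powNonneg (P : Matrix S S ℝ) (hP0 : ∀ x y, 0 ≤ P x y) :
    ∀ n (x y : S), 0 ≤ (P ^ n) x y := by
  intro n
  induction n with
  | zero => intro x y; rw [pow_zero, Matrix.one_apply]; split <;> norm_num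
  | succ n ih =>
    intro x y
    rw [pow_succ, Matrix.mul_apply]
    exact Finset.sum_nonneg fun z _ => mul_nonneg (ih x z) (hP0 z y)

lemma powRowSum (P : Matrix S S ℝ) (hP1 : ∀ x, ∑ y, P x y = 1) :
    ∀ n (x : S), ∑ y, (P ^ n) x y = 1 := by
  intro n
  induction n with
  | zero => intro x; simp [Matrix.one_apply]
  | succ n ih =>
    intro x
    simp only [pow_succ, Matrix.mul_apply]
    rw [Finset.sum_comm]
    have h : ∀ j : S, ∑ y, (P ^ n) x j * P j y = (P ^ n) x j := by
      intro j; rw [← Finset.mul_sum, hP1 j, mul_one]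
    simp only [h]; exact ih x

lemma powLeOne (P : Matrix S S ℝ) (hP0 : ∀ x y, 0 ≤ P x y) (hP1 : ∀ x, ∑ y, P x y = 1)
    (n : ℕ) (x y : S) : (P ^ n) x y ≤ 1 := by
  have h := powRowSum P hP1 n x
  calc (P ^ n) x y ≤ ∑ z, (P ^ n) x z :=
        Finset.single_le_sum (fun z _ => powNonneg P hP0 n x z) (Finset.mem_univ y)
    _ = 1 := h

lemma piPow (P : Matrix S S ℝ) (π : S → ℝ) (hπP : ∀ y, ∑ x, π x * P x y = π y) :
    ∀ n (y : S), ∑ x, π x * (P ^ n) x y = π y := by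
  intro n
  induction n with
  | zero => intro y; simp [Matrix.one_apply]
  | succ n ih =>
    intro y
    simp only [pow_succ, Matrix.mul_apply, Finset.mul_sum]
    rw [Finset.sum_comm]
    have h : ∀ z : S, ∑ x, π x * ((P ^ n) x z * P z y) = π z * P z y := by
      intro z
      calc ∑ x, π x * ((P ^ n) x z * P z y)
          = (∑ x, π x * (P ^ n) x z) * P z y := by
            rw [Finset.sum_mul]; exact Finset.sum_congr rfl fun x _ => by ring
        _ = π z * P z y := by rw [ih z]
    simp only [h]
    exact hπP y

lemma piPos (P : Matrix S S ℝ) (π : S → ℝ) (hP0 : ∀ x y, 0 ≤ P x y)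
    (hirr : ∀ x y, ∃ n, 0 < (P ^ n) x y)
    (hπ0 : ∀ x, 0 ≤ π x) (hπ1 : ∑ x, π x = 1)
    (hπP : ∀ y, ∑ x, π x * P x y = π y) : ∀ y, 0 < π y := by
  have hx : ∃ x, 0 < π x := by
    by_contra h
    push_neg at h
    have : ∑ x, π x ≤ 0 := Finset.sum_nonpos fun x _ => h x
    rw [hπ1] at this; linarith
  obtain ⟨x0, hx0⟩ := hx
  intro y
  obtain ⟨n, hn⟩ := hirr x0 y
  have hle : π x0 * (P ^ n) x0 y ≤ π y := by
    rw [← piPow P π hπP n y]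
    exact Finset.single_le_sum
      (fun z _ => mul_nonneg (hπ0 z) (powNonneg P hP0 n z y)) (Finset.mem_univ x0)
  nlinarith

end auxlems

section geolems

variable {t : ℕ} (ht : 1 ≤ t)

lemma tpos (ht : 1 ≤ t) : (0:ℝ) < t := by exact_mod_cast Nat.lt_of_lt_of_le Nat.zero_lt_one ht

lemma qpos (ht : 1 ≤ t) : 0 < 1 / (t:ℝ) := by
  have := tpos ht
  positivity

lemma qle1 (ht : 1 ≤ t) : 1 / (t:ℝ) ≤ 1 := by
  rw [div_le_one (tpos ht)]; exact_mod_cast ht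

lemma geo_nonneg (ht : 1 ≤ t) (n : ℕ) : 0 ≤ geo t n := by
  unfold geo
  split
  · exact le_refl _
  · exact mul_nonneg (qpos ht).le (pow_nonneg (by linarith [qle1 ht]) _)

lemma geo_zero : geo t 0 = 0 := by simp [geo]

lemma geo_succ (n : ℕ) : geo t (n + 1) = (1 / (t:ℝ)) * (1 - 1/(t:ℝ)) ^ n := by simp [geo]

lemma geo_shift (n s : ℕ) : geo t (n + 1 + s) = (1 - 1/(t:ℝ)) ^ s * geo t (n + 1) := by
  rw [geo_succ, show n + 1 + s = (n + s) + 1 by ring, geo_succ, pow_add]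
  ring

lemma geo_hasSum (ht : 1 ≤ t) : HasSum (geo t) 1 := by
  have hr0 : 0 ≤ 1 - 1/(t:ℝ) := by linarith [qle1 ht]
  have hr1 : 1 - 1/(t:ℝ) < 1 := by linarith [qpos ht]
  have h := (hasSum_geometric_of_lt_one hr0 hr1).mul_left (1/(t:ℝ))
  have he : (1/(t:ℝ)) * (1 - (1 - 1/(t:ℝ)))⁻¹ = 1 := by
    rw [show 1 - (1 - 1/(t:ℝ)) = 1/(t:ℝ) by ring]
    field_simp
  rw [he] at h
  have h2 : HasSum (fun n => geo t (n + 1)) 1 := by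
    have hfun : (fun n => geo t (n + 1)) = fun n : ℕ => (1/(t:ℝ)) * (1 - 1/(t:ℝ)) ^ n :=
      funext fun n => geo_succ n
    rw [hfun]; exact h
  have := (hasSum_nat_add_iff (f := geo t) 1).1 h2
  simpa [geo_zero] using this

lemma geo_summable (ht : 1 ≤ t) : Summable (geo t) := (geo_hasSum ht).summable

lemma geo_tsum (ht : 1 ≤ t) : ∑' n, geo t n = 1 := (geo_hasSum ht).tsum_eq

lemma geo_partial (ht : 1 ≤ t) (s : ℕ) :
    ∑ m ∈ Finset.range (s + 1), geo t m = 1 - (1 - 1/(t:ℝ)) ^ s := by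
  induction s with
  | zero => simp [geo_zero]
  | succ s ih =>
    rw [Finset.sum_range_succ, ih, geo_succ, pow_succ]
    ring

end geolems


lemma summable_of_prod_bound {W : ℕ × ℕ → ℝ} {f h : ℕ → ℝ}
    (hW0 : ∀ p, 0 ≤ W p) (hle : ∀ p, W p ≤ f p.1 * h p.2)
    (hf : Summable f) (hh : Summable h)
    (hf0 : ∀ n, 0 ≤ f n) (hh0 : ∀ n, 0 ≤ h n) : Summable W :=
  Summable.of_nonneg_of_le hW0 hle (hf.mul_of_nonneg hh (fun n => hf0 n) (fun n => hh0 n))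

lemma tsum_swap {W : ℕ × ℕ → ℝ} (hW : Summable W) :
    ∑' a, ∑' b, W (a, b) = ∑' b, ∑' a, W (a, b) := by
  have h1 : ∀ a, Summable fun b => W (a, b) := fun a => hW.prod_factor a
  have h2 : ∀ b, Summable fun a => W (a, b) := fun b => (hW.prod_symm).prod_factor b
  have hW' : Summable (Function.uncurry fun a b => W (a, b)) := by
    refine hW.congr fun p => ?_
    simp [Function.uncurry]
  exact (Summable.tsum_comm' (f := fun a b => W (a, b)) hW' h1 h2).symm

lemma key_bound {S : Type*} [Fintype S] [DecidableEq S]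
    (P : Matrix S S ℝ) (π : S → ℝ)
    (hP0 : ∀ x y, 0 ≤ P x y) (hP1 : ∀ x, ∑ y, P x y = 1)
    (hπpos : ∀ y, 0 < π y) (hπ1 : ∑ x, π x = 1)
    (hπP : ∀ y, ∑ x, π x * P x y = π y)
    (x : S) (t : ℕ) (ht : 1 ≤ t)
    (R : StoppingRule P (fun y => if y = x then (1:ℝ) else 0)) (hR : IsStat R π) :
    ENNReal.ofReal (tv (lawAt P (geo t) x) π * t) ≤ stopExp R := by
  by_cases htop : stopExp R = ⊤
  · rw [htop]; exact le_top
  have ht0 : (0:ℝ) < t := tpos ht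
  have hq0 : 0 < 1/(t:ℝ) := qpos ht
  have hq1 : 1/(t:ℝ) ≤ 1 := qle1 ht
  have hr0 : (0:ℝ) ≤ 1 - 1/(t:ℝ) := by linarith
  have hr1 : (1:ℝ) - 1/(t:ℝ) < 1 := by linarith
  have hrpow : ∀ s : ℕ, (1 - 1/(t:ℝ)) ^ s ≤ 1 := fun s => pow_le_one₀ hr0 hr1.le
  have hrpow0 : ∀ s : ℕ, 0 ≤ (1 - 1/(t:ℝ)) ^ s := fun s => pow_nonneg hr0 s
  have hg0 : ∀ n, 0 ≤ geo t n := geo_nonneg ht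
  have hgs : Summable (geo t) := geo_summable ht
  -- σ-bar
  set sb : ℕ → ℝ := fun s => ∑ z, R.σ s z with hsbdef
  have hσy : ∀ z, Summable fun s => R.σ s z := by
    intro z
    by_contra h
    have h0 := tsum_eq_zero_of_not_summable h
    rw [hR z] at h0
    exact (hπpos z).ne' h0
  have hsb0 : ∀ s, 0 ≤ sb s := fun s => Finset.sum_nonneg fun z _ => R.σ_nonneg s z
  have hsbS : Summable sb := summable_sum fun z _ => hσy z
  have hsb1 : ∑' s, sb s = 1 := by
    rw [hsbdef]
    rw [Summable.tsum_finsetSum (fun z (_ : z ∈ Finset.univ) => hσy z)]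
    rw [Finset.sum_congr rfl fun z _ => hR z]
    exact hπ1
  have hsbpart : ∀ m, ∑ s ∈ Finset.range m, sb s ≤ 1 := by
    intro m
    rw [← hsb1]
    exact Summable.sum_le_tsum (Finset.range m) (fun s _ => hsb0 s) hsbS
  -- θ facts
  have hθ0 : ∀ m z, 0 ≤ R.θ m z := by
    intro m
    induction m with
    | zero => intro z; rw [R.θ_zero]; split <;> norm_num
    | succ m ih =>
      intro z
      rw [R.θ_succ]
      exact Finset.sum_nonneg fun w _ =>
        mul_nonneg (by linarith [R.σ_le m w]) (hP0 w z)
  have hTb : ∀ m, ∑ z, R.θ m z = 1 - ∑ s ∈ Finset.range m, sb s := by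
    intro m
    induction m with
    | zero =>
      simp only [Finset.range_zero, Finset.sum_empty, sub_zero]
      calc ∑ z, R.θ 0 z = ∑ z, (if z = x then (1:ℝ) else 0) :=
            Finset.sum_congr rfl fun z _ => R.θ_zero z
        _ = 1 := by simp
    | succ m ih =>
      have hstep : ∑ z, R.θ (m+1) z = (∑ z, R.θ m z) - sb m := by
        simp only [R.θ_succ]
        rw [Finset.sum_comm]
        have h : ∀ w : S, ∑ z, (R.θ m w - R.σ m w) * P w z = R.θ m w - R.σ m w := by
          intro w; rw [← Finset.mul_sum, hP1 w, mul_one]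
        simp only [h]
        rw [Finset.sum_sub_distrib]
      rw [hstep, ih, Finset.sum_range_succ]
      ring
  have hθle1 : ∀ m z, R.θ m z ≤ 1 := by
    intro m z
    calc R.θ m z ≤ ∑ w, R.θ m w :=
          Finset.single_le_sum (fun w _ => hθ0 m w) (Finset.mem_univ z)
      _ ≤ 1 := by
          rw [hTb m]
          have := Finset.sum_nonneg (fun s (_ : s ∈ Finset.range m) => hsb0 s)
          linarith
  have hTbtail : ∀ m, ∑ z, R.θ m z = ∑' k, sb (k + m) := by
    intro m
    have h := Summable.sum_add_tsum_nat_add (f := sb) m hsbS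
    rw [hsb1] at h
    rw [hTb m]
    linarith
  -- law facts
  have hLsum : ∀ z y, Summable fun n => geo t n * (P ^ n) z y := fun z y =>
    Summable.of_nonneg_of_le
      (fun n => mul_nonneg (hg0 n) (powNonneg P hP0 n z y))
      (fun n => mul_le_of_le_one_right (hg0 n) (powLeOne P hP0 hP1 n z y)) hgs
  have hL0 : ∀ z y, 0 ≤ lawAt P (geo t) z y := fun z y =>
    tsum_nonneg fun n => mul_nonneg (hg0 n) (powNonneg P hP0 n z y)
  have hLtot : ∀ z, ∑ y, lawAt P (geo t) z y = 1 := by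
    intro z
    have h1 : ∑ y, lawAt P (geo t) z y = ∑' n, ∑ y, geo t n * (P ^ n) z y :=
      (Summable.tsum_finsetSum fun y _ => hLsum z y).symm
    rw [h1]
    have h2 : ∀ n : ℕ, ∑ y, geo t n * (P ^ n) z y = geo t n := by
      intro n; rw [← Finset.mul_sum, powRowSum P hP1, mul_one]
    rw [tsum_congr h2, geo_tsum ht]
  have hLle1 : ∀ z y, lawAt P (geo t) z y ≤ 1 := by
    intro z y
    calc lawAt P (geo t) z y ≤ ∑ w, lawAt P (geo t) z w :=
          Finset.single_le_sum (fun w _ => hL0 z w) (Finset.mem_univ y)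
      _ = 1 := hLtot z
  -- tau
  set tb : ℕ → S → ℝ := fun s y => ∑ z, R.σ s z * lawAt P (geo t) z y with htbdef
  have hτ0 : ∀ s y, 0 ≤ tb s y := fun s y =>
    Finset.sum_nonneg fun z _ => mul_nonneg (R.σ_nonneg s z) (hL0 z y)
  have hτle : ∀ s y, tb s y ≤ sb s := fun s y =>
    Finset.sum_le_sum fun z _ => mul_le_of_le_one_right (R.σ_nonneg s z) (hLle1 z y)
  have hτS : ∀ y, Summable fun s => tb s y := fun y =>
    Summable.of_nonneg_of_le (fun s => hτ0 s y) (fun s => hτle s y) hsbS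
  have hτtot : ∀ y, ∑' s, tb s y = π y := by
    intro y
    have h1 : ∑' s, tb s y = ∑ z, π z * lawAt P (geo t) z y := by
      rw [htbdef]
      rw [Summable.tsum_finsetSum (fun z (_ : z ∈ Finset.univ) => (hσy z).mul_right _)]
      exact Finset.sum_congr rfl fun z _ => by rw [tsum_mul_right, hR z]
    rw [h1]
    have h2 : ∀ z, π z * lawAt P (geo t) z y = ∑' n, geo t n * (π z * (P ^ n) z y) := by
      intro z
      rw [show lawAt P (geo t) z y = ∑' n, geo t n * (P ^ n) z y from rfl, ← tsum_mul_left]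
      exact tsum_congr fun n => by ring
    have h3 : ∀ z, Summable fun n => geo t n * (π z * (P ^ n) z y) := by
      intro z
      refine ((hLsum z y).mul_left (π z)).congr fun n => by ring
    calc ∑ z, π z * lawAt P (geo t) z y
        = ∑ z, ∑' n, geo t n * (π z * (P ^ n) z y) := Finset.sum_congr rfl fun z _ => h2 z
      _ = ∑' n, ∑ z, geo t n * (π z * (P ^ n) z y) := (Summable.tsum_finsetSum fun z _ => h3 z).symm
      _ = ∑' n, geo t n * π y := tsum_congr fun n => by
            rw [← Finset.mul_sum, piPow P π hπP n y]
      _ = π y := by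
            have he : ∑' n, geo t n * π y = (∑' n, geo t n) * π y := tsum_mul_right
            rw [he, geo_tsum ht, one_mul]
  -- decomposition of P^m
  have hdec : ∀ m (y : S), (P ^ m) x y
      = R.θ m y + ∑ s ∈ Finset.range m, ∑ z, R.σ s z * (P ^ (m - s)) z y := by
    intro m
    induction m with
    | zero =>
      intro y
      simp [Matrix.one_apply, R.θ_zero, eq_comm]
    | succ m ih =>
      intro y
      have h1 : (P ^ (m+1)) x y = ∑ z, (P ^ m) x z * P z y := by
        rw [pow_succ, Matrix.mul_apply]
      have hθs : R.θ (m+1) y = (∑ z, R.θ m z * P z y) - ∑ z, R.σ m z * P z y := by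
        rw [R.θ_succ, ← Finset.sum_sub_distrib]
        exact Finset.sum_congr rfl fun z _ => by ring
      have h2 : ∑ z, (∑ s ∈ Finset.range m, ∑ w, R.σ s w * (P ^ (m - s)) w z) * P z y
          = ∑ s ∈ Finset.range m, ∑ w, R.σ s w * (P ^ (m + 1 - s)) w y := by
        calc ∑ z, (∑ s ∈ Finset.range m, ∑ w, R.σ s w * (P ^ (m - s)) w z) * P z y
            = ∑ z, ∑ s ∈ Finset.range m, (∑ w, R.σ s w * (P ^ (m - s)) w z) * P z y := by
              exact Finset.sum_congr rfl fun z _ => Finset.sum_mul ..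
          _ = ∑ s ∈ Finset.range m, ∑ z, (∑ w, R.σ s w * (P ^ (m - s)) w z) * P z y :=
              Finset.sum_comm
          _ = ∑ s ∈ Finset.range m, ∑ w, R.σ s w * (P ^ (m + 1 - s)) w y := by
              refine Finset.sum_congr rfl fun s hs => ?_
              have hs' : s < m := Finset.mem_range.1 hs
              calc ∑ z, (∑ w, R.σ s w * (P ^ (m - s)) w z) * P z y
                  = ∑ z, ∑ w, R.σ s w * (P ^ (m - s)) w z * P z y := by
                    exact Finset.sum_congr rfl fun z _ => Finset.sum_mul ..
                _ = ∑ w, ∑ z, R.σ s w * (P ^ (m - s)) w z * P z y := Finset.sum_comm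
                _ = ∑ w, R.σ s w * ∑ z, (P ^ (m - s)) w z * P z y := by
                    refine Finset.sum_congr rfl fun w _ => ?_
                    rw [Finset.mul_sum]
                    exact Finset.sum_congr rfl fun z _ => by ring
                _ = ∑ w, R.σ s w * (P ^ (m + 1 - s)) w y := by
                    refine Finset.sum_congr rfl fun w _ => ?_
                    congr 1
                    rw [← Matrix.mul_apply, ← pow_succ,
                      show m - s + 1 = m + 1 - s by omega]
      have h3 : ∑ z, R.θ m z * P z y = R.θ (m+1) y + ∑ z, R.σ m z * P z y := by
        rw [hθs]; ring
      calc (P ^ (m+1)) x y = ∑ z, (P ^ m) x z * P z y := h1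
        _ = ∑ z, (R.θ m z + ∑ s ∈ Finset.range m, ∑ w, R.σ s w * (P ^ (m - s)) w z) * P z y := by
            exact Finset.sum_congr rfl fun z _ => by rw [← ih z]
        _ = (∑ z, R.θ m z * P z y)
            + ∑ z, (∑ s ∈ Finset.range m, ∑ w, R.σ s w * (P ^ (m - s)) w z) * P z y := by
            rw [← Finset.sum_add_distrib]
            exact Finset.sum_congr rfl fun z _ => by ring
        _ = R.θ (m+1) y + ∑ z, R.σ m z * P z y
            + ∑ s ∈ Finset.range m, ∑ w, R.σ s w * (P ^ (m + 1 - s)) w y := by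
            rw [h3, h2]
        _ = R.θ (m+1) y + ∑ s ∈ Finset.range (m+1), ∑ z, R.σ s z * (P ^ (m + 1 - s)) z y := by
            rw [Finset.sum_range_succ, show m + 1 - m = 1 by omega, pow_one]
            ring
  -- A and C
  set A : S → ℝ := fun y => ∑' m, geo t m * R.θ m y with hAdef
  have hAsum : ∀ y, Summable fun m => geo t m * R.θ m y := fun y =>
    Summable.of_nonneg_of_le
      (fun m => mul_nonneg (hg0 m) (hθ0 m y))
      (fun m => mul_le_of_le_one_right (hg0 m) (hθle1 m y)) hgs
  have hA0 : ∀ y, 0 ≤ A y := fun y =>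
    tsum_nonneg fun m => mul_nonneg (hg0 m) (hθ0 m y)
  set Cc : S → ℝ := fun y => ∑' s, (1 - (1 - 1/(t:ℝ)) ^ s) * tb s y with hCdef
  have hCsum : ∀ y, Summable fun s => (1 - (1 - 1/(t:ℝ)) ^ s) * tb s y := fun y =>
    Summable.of_nonneg_of_le
      (fun s => mul_nonneg (by linarith [hrpow s]) (hτ0 s y))
      (fun s => le_trans
        (mul_le_of_le_one_left (hτ0 s y) (by linarith [hrpow0 s])) (hτle s y)) hsbS
  have hC0 : ∀ y, 0 ≤ Cc y := fun y =>
    tsum_nonneg fun s => mul_nonneg (by linarith [hrpow s]) (hτ0 s y)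
  have hrtS : ∀ y, Summable fun s => (1 - 1/(t:ℝ)) ^ s * tb s y := fun y =>
    Summable.of_nonneg_of_le
      (fun s => mul_nonneg (hrpow0 s) (hτ0 s y))
      (fun s => le_trans (mul_le_of_le_one_left (hτ0 s y) (hrpow s)) (hτle s y)) hsbS
  -- main per-y identity
  have hyineq : ∀ y, |lawAt P (geo t) x y - π y| ≤ A y + Cc y := by
    intro y
    set W : ℕ × ℕ → ℝ := fun p =>
      if p.1 < p.2 then geo t p.2 * (∑ z, R.σ p.1 z * (P ^ (p.2 - p.1)) z y) else 0
      with hWdef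
    have hu0 : ∀ s n : ℕ, 0 ≤ ∑ z, R.σ s z * (P ^ n) z y := fun s n =>
      Finset.sum_nonneg fun z _ => mul_nonneg (R.σ_nonneg s z) (powNonneg P hP0 n z y)
    have hule : ∀ s n : ℕ, (∑ z, R.σ s z * (P ^ n) z y) ≤ sb s := fun s n =>
      Finset.sum_le_sum fun z _ =>
        mul_le_of_le_one_right (R.σ_nonneg s z) (powLeOne P hP0 hP1 n z y)
    have hW0 : ∀ p, 0 ≤ W p := by
      intro p
      rw [hWdef]
      dsimp only
      split
      · exact mul_nonneg (hg0 _) (hu0 _ _)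
      · exact le_refl 0
    have hWle : ∀ p, W p ≤ sb p.1 * geo t p.2 := by
      intro p
      rw [hWdef]
      dsimp only
      split
      · rw [mul_comm (sb p.1)]
        exact mul_le_mul_of_nonneg_left (hule _ _) (hg0 _)
      · exact mul_nonneg (hsb0 _) (hg0 _)
    have hWS : Summable W := summable_of_prod_bound hW0 hWle hsbS hgs hsb0 hg0
    have hrow : ∀ m, ∑' s, W (s, m)
        = ∑ s ∈ Finset.range m, geo t m * (∑ z, R.σ s z * (P ^ (m - s)) z y) := by
      intro m
      rw [tsum_eq_sum (s := Finset.range m)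
        (fun s hs => by
          rw [hWdef]; dsimp only
          rw [if_neg (fun hc => hs (Finset.mem_range.2 hc))])]
      refine Finset.sum_congr rfl fun s hs => ?_
      rw [hWdef]; dsimp only
      rw [if_pos (Finset.mem_range.1 hs)]
    have hUsum : ∀ s, Summable fun n => geo t n * (∑ z, R.σ s z * (P ^ n) z y) := by
      intro s
      refine Summable.of_nonneg_of_le
        (fun n => mul_nonneg (hg0 n) (hu0 s n))
        (fun n => mul_le_mul_of_nonneg_left (hule s n) (hg0 n))
        (hgs.mul_right (sb s))
    have hτrepr : ∀ s, tb s y = ∑' n, geo t n * (∑ z, R.σ s z * (P ^ n) z y) := by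
      intro s
      calc tb s y = ∑ z, ∑' n, R.σ s z * (geo t n * (P ^ n) z y) := by
            rw [htbdef]
            exact Finset.sum_congr rfl fun z _ => (tsum_mul_left).symm
        _ = ∑' n, ∑ z, R.σ s z * (geo t n * (P ^ n) z y) :=
            (Summable.tsum_finsetSum fun z _ => (hLsum z y).mul_left _).symm
        _ = ∑' n, geo t n * (∑ z, R.σ s z * (P ^ n) z y) := by
            refine tsum_congr fun n => ?_
            rw [Finset.mul_sum]
            exact Finset.sum_congr rfl fun z _ => by ring
    have hτshift : ∀ s, tb s y = ∑' n, geo t (n+1) * (∑ z, R.σ s z * (P ^ (n+1)) z y) := by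
      intro s
      rw [hτrepr s, Summable.tsum_eq_zero_add (hUsum s)]
      simp [geo_zero]
    have hcol : ∀ s, ∑' m, W (s, m) = (1 - 1/(t:ℝ)) ^ s * tb s y := by
      intro s
      have hWs : Summable fun n => W (s, n) := hWS.prod_factor s
      have h1 := Summable.sum_add_tsum_nat_add (f := fun n => W (s, n)) (s+1) hWs
      have h2 : ∑ i ∈ Finset.range (s+1), W (s, i) = 0 := by
        refine Finset.sum_eq_zero fun i hi => ?_
        rw [hWdef]; dsimp only
        rw [if_neg (by have := Finset.mem_range.1 hi; omega)]
      have h3 : ∀ n : ℕ, W (s, n + (s+1))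
          = (1 - 1/(t:ℝ)) ^ s * (geo t (n+1) * (∑ z, R.σ s z * (P ^ (n+1)) z y)) := by
        intro n
        rw [hWdef]; dsimp only
        rw [if_pos (by omega : s < n + (s+1))]
        rw [show n + (s+1) - s = n + 1 by omega]
        rw [show n + (s+1) = n + 1 + s by ring, geo_shift]
        ring
      rw [← h1, h2, zero_add, tsum_congr h3, tsum_mul_left, ← hτshift s]
    have hin : ∀ m, Summable fun s => W (s, m) := fun m => hWS.prod_symm.prod_factor m
    have hsum2 : Summable fun m => ∑' s, W (s, m) := by
      refine Summable.of_nonneg_of_le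
        (fun m => tsum_nonneg fun s => hW0 (s, m)) (fun m => ?_) hgs
      rw [hrow m]
      calc ∑ s ∈ Finset.range m, geo t m * (∑ z, R.σ s z * (P ^ (m - s)) z y)
          ≤ ∑ s ∈ Finset.range m, geo t m * sb s :=
            Finset.sum_le_sum fun s _ => mul_le_mul_of_nonneg_left (hule s _) (hg0 m)
        _ = geo t m * ∑ s ∈ Finset.range m, sb s := by rw [Finset.mul_sum]
        _ ≤ geo t m * 1 := mul_le_mul_of_nonneg_left (hsbpart m) (hg0 m)
        _ = geo t m := mul_one _
    have hdecsum : lawAt P (geo t) x y = A y + ∑' m, ∑' s, W (s, m) := by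
      have hterm : ∀ m, geo t m * (P ^ m) x y = geo t m * R.θ m y + ∑' s, W (s, m) := by
        intro m
        rw [hrow m, ← Finset.mul_sum, hdec m y]
        ring
      calc lawAt P (geo t) x y = ∑' m, geo t m * (P ^ m) x y := rfl
        _ = ∑' m, (geo t m * R.θ m y + ∑' s, W (s, m)) := tsum_congr hterm
        _ = A y + ∑' m, ∑' s, W (s, m) := Summable.tsum_add (hAsum y) hsum2
    have hD : ∑' m, ∑' s, W (s, m) = ∑' s, (1 - 1/(t:ℝ)) ^ s * tb s y := by
      rw [← tsum_swap hWS]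
      exact tsum_congr hcol
    have h5 : π y - ∑' s, (1 - 1/(t:ℝ)) ^ s * tb s y = Cc y := by
      rw [← hτtot y, ← Summable.tsum_sub (hτS y) (hrtS y), hCdef]
      exact tsum_congr fun s => by ring
    have h6 : lawAt P (geo t) x y - π y = A y - Cc y := by
      rw [hdecsum, hD]
      linarith
    rw [h6, abs_le]
    constructor
    · linarith [hA0 y, hC0 y]
    · linarith [hA0 y, hC0 y]
  -- sum over y
  have hSA : ∑ y, A y = ∑' m, geo t m * (∑ z, R.θ m z) := by
    calc ∑ y, A y = ∑' m, ∑ y, geo t m * R.θ m y := (Summable.tsum_finsetSum fun y _ => hAsum y).symm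
      _ = ∑' m, geo t m * (∑ z, R.θ m z) := tsum_congr fun m => (Finset.mul_sum ..).symm
  have hSC : ∑ y, Cc y = ∑' s, (1 - (1 - 1/(t:ℝ)) ^ s) * sb s := by
    calc ∑ y, Cc y = ∑' s, ∑ y, (1 - (1 - 1/(t:ℝ)) ^ s) * tb s y :=
          (Summable.tsum_finsetSum fun y _ => hCsum y).symm
      _ = ∑' s, (1 - (1 - 1/(t:ℝ)) ^ s) * sb s := by
          refine tsum_congr fun s => ?_
          rw [← Finset.mul_sum]
          congr 1
          calc ∑ y, tb s y = ∑ y, ∑ z, R.σ s z * lawAt P (geo t) z y := rfl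
            _ = ∑ z, ∑ y, R.σ s z * lawAt P (geo t) z y := Finset.sum_comm
            _ = ∑ z, R.σ s z * ∑ y, lawAt P (geo t) z y := by
                exact Finset.sum_congr rfl fun z _ => (Finset.mul_sum ..).symm
            _ = sb s := by
                rw [hsbdef]
                exact Finset.sum_congr rfl fun z _ => by rw [hLtot z, mul_one]
  -- second Fubini : SA value
  have hSA2 : ∑' m, geo t m * (∑ z, R.θ m z) = ∑' s, (1 - (1 - 1/(t:ℝ)) ^ s) * sb s := by
    set V : ℕ × ℕ → ℝ := fun p => if p.1 ≤ p.2 then geo t p.1 * sb p.2 else 0 with hVdef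
    have hV0 : ∀ p, 0 ≤ V p := by
      intro p
      rw [hVdef]; dsimp only
      split
      · exact mul_nonneg (hg0 _) (hsb0 _)
      · exact le_refl 0
    have hVle : ∀ p, V p ≤ geo t p.1 * sb p.2 := by
      intro p
      rw [hVdef]; dsimp only
      split
      · exact le_refl _
      · exact mul_nonneg (hg0 _) (hsb0 _)
    have hVS : Summable V := summable_of_prod_bound hV0 hVle hgs hsbS hg0 hsb0
    have hVrow : ∀ m, ∑' s, V (m, s) = geo t m * (∑ z, R.θ m z) := by
      intro m
      have hVm : Summable fun s => V (m, s) := hVS.prod_factor m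
      have h1 := Summable.sum_add_tsum_nat_add (f := fun s => V (m, s)) m hVm
      have h2 : ∑ i ∈ Finset.range m, V (m, i) = 0 := by
        refine Finset.sum_eq_zero fun i hi => ?_
        rw [hVdef]; dsimp only
        rw [if_neg (by have := Finset.mem_range.1 hi; omega)]
      have h3 : ∀ k : ℕ, V (m, k + m) = geo t m * sb (k + m) := by
        intro k
        rw [hVdef]; dsimp only
        rw [if_pos (by omega : m ≤ k + m)]
      rw [← h1, h2, zero_add, tsum_congr h3, tsum_mul_left, ← hTbtail m]
    have hVcol : ∀ s, ∑' m, V (m, s) = (1 - (1 - 1/(t:ℝ)) ^ s) * sb s := by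
      intro s
      rw [tsum_eq_sum (s := Finset.range (s+1))
        (fun m hm => by
          rw [hVdef]; dsimp only
          rw [if_neg (fun hle => hm (Finset.mem_range.2 (Nat.lt_succ_of_le hle)))])]
      have h4 : ∀ m ∈ Finset.range (s+1), V (m, s) = geo t m * sb s := by
        intro m hm
        rw [hVdef]; dsimp only
        rw [if_pos (by have := Finset.mem_range.1 hm; omega)]
      rw [Finset.sum_congr rfl h4, ← Finset.sum_mul, geo_partial ht s]
    calc ∑' m, geo t m * (∑ z, R.θ m z) = ∑' m, ∑' s, V (m, s) :=
          (tsum_congr hVrow).symm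
      _ = ∑' s, ∑' m, V (m, s) := tsum_swap hVS
      _ = ∑' s, (1 - (1 - 1/(t:ℝ)) ^ s) * sb s := tsum_congr hVcol
  -- expectation
  have hstop : stopExp R = ∑' s : ℕ, ENNReal.ofReal ((s:ℝ) * sb s) := by
    unfold stopExp
    refine tsum_congr fun s => ?_
    rw [ENNReal.ofReal_mul (by positivity : (0:ℝ) ≤ (s:ℝ)), ENNReal.ofReal_natCast]
  have hESumm : Summable fun s : ℕ => (s:ℝ) * sb s := by
    have h := ENNReal.summable_toReal (by rw [← hstop]; exact htop)
    refine h.congr fun s => ?_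
    rw [ENNReal.toReal_ofReal (mul_nonneg (Nat.cast_nonneg s) (hsb0 s))]
  have hEval : ∑' s : ℕ, (s:ℝ) * sb s = (stopExp R).toReal := by
    rw [hstop, ENNReal.tsum_toReal_eq (fun s => ENNReal.ofReal_ne_top)]
    exact (tsum_congr fun s =>
      (ENNReal.toReal_ofReal (mul_nonneg (Nat.cast_nonneg s) (hsb0 s))).symm)
  have hCsummable : Summable fun s => (1 - (1 - 1/(t:ℝ)) ^ s) * sb s :=
    Summable.of_nonneg_of_le
      (fun s => mul_nonneg (by linarith [hrpow s]) (hsb0 s))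
      (fun s => mul_le_of_le_one_left (hsb0 s) (by linarith [hrpow0 s])) hsbS
  have hscompare : ∑' s, (1 - (1 - 1/(t:ℝ)) ^ s) * sb s
      ≤ (1/(t:ℝ)) * ∑' s : ℕ, (s:ℝ) * sb s := by
    rw [← tsum_mul_left]
    refine Summable.tsum_le_tsum (fun s => ?_) hCsummable (hESumm.mul_left _)
    have hb : 1 - (1 - 1/(t:ℝ)) ^ s ≤ (s:ℝ) * (1/(t:ℝ)) := by
      have h := one_add_mul_le_pow (a := -(1/(t:ℝ))) (by linarith) s
      have h' : (1 + -(1/(t:ℝ))) = 1 - 1/(t:ℝ) := by ring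
      rw [h'] at h
      linarith
    calc (1 - (1 - 1/(t:ℝ)) ^ s) * sb s ≤ ((s:ℝ) * (1/(t:ℝ))) * sb s :=
          mul_le_mul_of_nonneg_right hb (hsb0 s)
      _ = (1/(t:ℝ)) * ((s:ℝ) * sb s) := by ring
  -- put together
  have habs : ∑ y, |lawAt P (geo t) x y - π y|
      ≤ 2 * ((1/(t:ℝ)) * (stopExp R).toReal) := by
    calc ∑ y, |lawAt P (geo t) x y - π y| ≤ ∑ y, (A y + Cc y) :=
          Finset.sum_le_sum fun y _ => hyineq y
      _ = ∑ y, A y + ∑ y, Cc y := Finset.sum_add_distrib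
      _ = 2 * ∑' s, (1 - (1 - 1/(t:ℝ)) ^ s) * sb s := by
          rw [hSA, hSA2, hSC]; ring
      _ ≤ 2 * ((1/(t:ℝ)) * ∑' s : ℕ, (s:ℝ) * sb s) := by linarith [hscompare]
      _ = 2 * ((1/(t:ℝ)) * (stopExp R).toReal) := by rw [hEval]
  have hfinal : tv (lawAt P (geo t) x) π * t ≤ (stopExp R).toReal := by
    have h7 : tv (lawAt P (geo t) x) π = (1/2) * ∑ y, |lawAt P (geo t) x y - π y| := rfl
    rw [h7]
    have h8 : (1/(t:ℝ)) * (t:ℝ) = 1 := by field_simp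
    calc (1/2) * (∑ y, |lawAt P (geo t) x y - π y|) * t
        ≤ (1/2) * (2 * ((1/(t:ℝ)) * (stopExp R).toReal)) * t := by
          have := mul_le_mul_of_nonneg_left habs (by norm_num : (0:ℝ) ≤ 1/2)
          exact mul_le_mul_of_nonneg_right this ht0.le
      _ = ((1/(t:ℝ)) * (t:ℝ)) * (stopExp R).toReal := by ring
      _ = (stopExp R).toReal := by rw [h8, one_mul]
  exact le_trans (ENNReal.ofReal_le_ofReal hfinal)
    (le_of_eq (ENNReal.ofReal_toReal htop))



/-- for every finite irreducible Markov chain, `t_G ≤ 4·t_stop + 1`,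
where `t_G` is the least `t ≥ 1` with `d_G(t) ≤ 1/4` and `t_stop` is the maximum over
starting states of the minimal expected stationary stopping time. -/
theorem claim_tG_le_tstop {S : Type*} [Fintype S] [DecidableEq S] [Nonempty S]
    (P : Matrix S S ℝ) (π : S → ℝ)
    (hP0 : ∀ x y, 0 ≤ P x y) (hP1 : ∀ x, ∑ y, P x y = 1)
    (hirr : ∀ x y, ∃ n, 0 < (P ^ n) x y)
    (hπ0 : ∀ x, 0 ≤ π x) (hπ1 : ∑ x, π x = 1)
    (hπP : ∀ y, ∑ x, π x * P x y = π y) :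
    ((sInf {t : ℕ | 1 ≤ t ∧ ∀ x, tv (lawAt P (geo t) x) π ≤ 1 / 4} : ℕ) : ℝ≥0∞)
      ≤ 4 * tstop P π + 1 := by
  have hπpos : ∀ y, 0 < π y := piPos P π hP0 hirr hπ0 hπ1 hπP
  by_cases htop : tstop P π = ⊤
  · rw [htop]
    have h : (4:ℝ≥0∞) * ⊤ + 1 = ⊤ := by simp
    rw [h]; exact le_top
  have ha0 : (0:ℝ) ≤ (4 * tstop P π).toReal := ENNReal.toReal_nonneg
  have h4T : (4:ℝ≥0∞) * tstop P π ≠ ⊤ := ENNReal.mul_ne_top (by simp) htop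
  have haT : (4 * tstop P π).toReal = 4 * (tstop P π).toReal := by
    rw [ENNReal.toReal_mul]; norm_num
  set n : ℕ := ⌈(4 * tstop P π).toReal⌉₊ with hn
  set tt : ℕ := max 1 n with htt
  have htt1 : 1 ≤ tt := le_max_left 1 n
  have hmem : tt ∈ {t : ℕ | 1 ≤ t ∧ ∀ x, tv (lawAt P (geo t) x) π ≤ 1 / 4} := by
    refine ⟨htt1, fun x => ?_⟩
    have hkey : ∀ R : {R : StoppingRule P (fun y => if y = x then (1:ℝ) else 0) // IsStat R π},
        ENNReal.ofReal (tv (lawAt P (geo tt) x) π * tt) ≤ stopExp R.1 :=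
      fun R => key_bound P π hP0 hP1 hπpos hπ1 hπP x tt htt1 R.1 R.2
    have h1 : ENNReal.ofReal (tv (lawAt P (geo tt) x) π * tt) ≤ tstop P π := by
      refine le_trans (le_iInf hkey) ?_
      exact le_iSup (fun x : S =>
        ⨅ R : {R : StoppingRule P (fun y => if y = x then (1:ℝ) else 0) // IsStat R π},
          stopExp R.1) x
    have h2 : tv (lawAt P (geo tt) x) π * tt ≤ (tstop P π).toReal :=
      (ENNReal.ofReal_le_iff_le_toReal htop).1 h1
    have httR : (1:ℝ) ≤ (tt:ℝ) := by exact_mod_cast htt1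
    have hta : (4 * tstop P π).toReal ≤ (tt:ℝ) :=
      le_trans (Nat.le_ceil _) (by exact_mod_cast le_max_right 1 n)
    have h3 : (tstop P π).toReal ≤ (tt:ℝ)/4 := by
      rw [haT] at hta; linarith
    by_contra hlt
    push_neg at hlt
    have h4 : (tt:ℝ)/4 < tv (lawAt P (geo tt) x) π * tt := by nlinarith
    linarith
  have hsle : sInf {t : ℕ | 1 ≤ t ∧ ∀ x, tv (lawAt P (geo t) x) π ≤ 1 / 4} ≤ tt :=
    Nat.sInf_le hmem
  have hcast : ((sInf {t : ℕ | 1 ≤ t ∧ ∀ x, tv (lawAt P (geo t) x) π ≤ 1 / 4} : ℕ) : ℝ≥0∞)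
      ≤ (tt : ℝ≥0∞) := by exact_mod_cast hsle
  refine le_trans hcast ?_
  by_cases hn0 : n = 0
  · have h5 : tt = 1 := by rw [htt, hn0]; omega
    rw [h5]
    simpa using (le_add_self : (1:ℝ≥0∞) ≤ 4 * tstop P π + 1)
  · have htn : tt = n := by rw [htt]; exact max_eq_right (Nat.one_le_iff_ne_zero.2 hn0)
    rw [htn]
    have h5 : ((n:ℕ):ℝ) < (4 * tstop P π).toReal + 1 := by
      rw [hn]; exact Nat.ceil_lt_add_one ha0
    calc ((n:ℕ) : ℝ≥0∞) = ENNReal.ofReal ((n:ℕ):ℝ) := (ENNReal.ofReal_natCast n).symm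
      _ ≤ ENNReal.ofReal ((4 * tstop P π).toReal + 1) :=
          ENNReal.ofReal_le_ofReal (le_of_lt h5)
      _ ≤ ENNReal.ofReal ((4 * tstop P π).toReal) + ENNReal.ofReal 1 := ENNReal.ofReal_add_le
      _ = 4 * tstop P π + 1 := by rw [ENNReal.ofReal_toReal h4T, ENNReal.ofReal_one]
end
end

section
/- Let S be a stopping time of a finite irreducible Markov chain started from distribution μ with exit frequencies ν_x = E_μ[∑_{k=0}^{S−1} 1(X_k = x)], and suppose P_μ(X_S ∈ ·) = ρ. Then for all states x, ν_x + ρ(x) = μ(x) + ∑_y ν_y P(y,x). -/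
open scoped BigOperators ENNReal

noncomputable section

/-- exit-frequency identity.  If `S` is a stopping time of a finite chain
started from `μ` with terminal distribution `ρ` and exit frequencies
`ν_x = E_μ[∑_{k<S} 1(X_k = x)] = ∑_t (θ_t(x) − σ_t(x))` (finite), then
`ν_x + ρ(x) = μ(x) + ∑_y ν_y P(y,x)` for every state `x`. -/
theorem claim_exit_frequencies {S : Type*} [Fintype S] [DecidableEq S]
    (P : Matrix S S ℝ)
    (hP0 : ∀ x y, 0 ≤ P x y) (hP1 : ∀ x, ∑ y, P x y = 1)
    (μ ρ : S → ℝ)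
    (hμ0 : ∀ x, 0 ≤ μ x) (hμ1 : ∑ x, μ x = 1)
    (R : StoppingRule P μ)
    (hsum : ∀ x, Summable fun t => R.θ t x)
    (hterm : ∀ y, ∑' t, R.σ t y = ρ y) (x : S) :
    (∑' t, (R.θ t x - R.σ t x)) + ρ x
      = μ x + ∑ y, (∑' t, (R.θ t y - R.σ t y)) * P y x := by
  have hσ : ∀ y, Summable fun t => R.σ t y := fun y =>
    (hsum y).of_nonneg_of_le (R.σ_nonneg · y) (R.σ_le · y)
  have hd : ∀ y, Summable fun t => R.θ t y - R.σ t y := fun y => (hsum y).sub (hσ y)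
  have key : (∑' t, (R.θ t x - R.σ t x)) + ∑' t, R.σ t x = ∑' t, R.θ t x := by
    rw [← Summable.tsum_add (hd x) (hσ x)]; simp
  rw [hterm x] at key
  rw [key, Summable.tsum_eq_zero_add (hsum x), R.θ_zero]
  congr 1
  have : ∀ t, R.θ (t + 1) x = ∑ y, (R.θ t y - R.σ t y) * P y x := fun t => R.θ_succ t x
  simp_rw [this]
  rw [Summable.tsum_finsetSum (fun y _ => (hd y).mul_right (P y x))]
  congr 1; ext y
  exact tsum_mul_right
end
end

section
/- Lovász–Winkler criterion: let S be a stopping time of a finite irreducible Markov chain started from μ with P_μ(X_S ∈ ·) = ρ. Then S attains the minimum expectation among all stopping times with terminal distribution ρ started from μ if and only if S has a halting state, i.e., a state z with exit frequency ν_z = E_μ[∑_{k=0}^{S−1} 1(X_k = z)] = 0. -/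
open scoped BigOperators ENNReal

noncomputable section

/-
Write `ν` for the exit frequencies of a stopping rule. They satisfy the conservation law
`ν + ρ = μ + ν P`, and the expected stopping time is `∑ ν`. Hence the exit frequencies of two rules
from `μ` with terminal law `ρ` differ by a `P`-invariant vector, that is by a multiple `c π`.
If `ν z = 0`, evaluating at `z` gives `c ≥ 0` for every competitor, so none is cheaper.
If `ν > 0` everywhere, then `ν - c π` with `c = min (ν / π) > 0` is still a nonnegative solution of
the conservation law. The rule that stops at each visit to `x` with probability
`ρ x / (ν x - c π x + ρ x)` realises it: its expected visit counts form the minimal nonnegative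
solution of the associated equation, and irreducibility makes that solution unique. This rule is
cheaper by `c`.
-/

open Matrix Finset

theorem ENNReal.tsum_nat_mul_eq_tsum_tsum_add (a : ℕ → ℝ≥0∞) :
    ∑' t : ℕ, (t : ℝ≥0∞) * a t = ∑' k, ∑' t, a (t + (k + 1)) := by
  have hcount (t : ℕ) : (t : ℝ≥0∞) * a t = ∑' k, if k < t then a t else 0 := by
    rw [tsum_eq_sum (s := range t) fun k hk => if_neg (by simpa using hk),
      sum_ite_of_true fun k hk => mem_range.1 hk, sum_const, card_range, nsmul_eq_mul]
  have htail (k : ℕ) : ∑' t, (if k < t then a t else 0) = ∑' t, a (t + (k + 1)) := by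
    rw [← ENNReal.summable.sum_add_tsum_nat_add' (k := k + 1),
      sum_eq_zero fun t ht => if_neg (by simpa [Nat.lt_succ_iff] using ht), zero_add]
    exact tsum_congr fun t => if_pos (by omega)
  simp only [hcount, htail, ENNReal.tsum_comm (f := fun t k => if k < t then a t else 0)]

theorem exists_nonneg_sub_smul_eq_zero {S : Type*} [Fintype S] [Nonempty S] {π : S → ℝ}
    (hπ : ∀ x, 0 < π x) (v : S → ℝ) : ∃ c : ℝ, 0 ≤ v - c • π ∧ ∃ z, (v - c • π) z = 0 := by
  obtain ⟨z, hz⟩ := Finite.exists_min fun x => v x / π x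
  refine ⟨v z / π z, fun x => ?_, z, ?_⟩
  · simpa using (le_div_iff₀ (hπ x)).1 (hz x)
  · simp [div_mul_cancel₀ _ (hπ z).ne']

namespace Matrix

theorem vecMul_pow_eq_self {S R : Type*} [Fintype S] [DecidableEq S] [Semiring R]
    {M : Matrix S S R} {v : S → R} (hv : v ᵥ* M = v) (n : ℕ) : v ᵥ* M ^ n = v := by
  induction n with
  | zero => simp
  | succ n ih => rw [pow_succ, ← vecMul_vecMul, ih, hv]

variable {S : Type*} [Fintype S] [DecidableEq S] {P : Matrix S S ℝ}

theorem sum_vecMul_of_mem_rowStochastic (hP : P ∈ rowStochastic ℝ S) (v : S → ℝ) :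
    ∑ y, (v ᵥ* P) y = ∑ x, v x := by
  rw [← dotProduct_one, ← dotProduct_mulVec, one_vecMul_of_mem_rowStochastic hP, dotProduct_one]

theorem vecMul_mono_of_mem_rowStochastic (hP : P ∈ rowStochastic ℝ S) {v w : S → ℝ}
    (hvw : v ≤ w) : v ᵥ* P ≤ w ᵥ* P := by
  intro y
  have := nonneg_vecMul_of_mem_rowStochastic hP (x := w - v) (fun x => sub_nonneg.2 (hvw x)) y
  rwa [sub_vecMul, Pi.sub_apply, sub_nonneg] at this

variable (hP : P ∈ rowStochastic ℝ S) (hirr : ∀ x y, ∃ n, 0 < (P ^ n) x y)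
include hP hirr

theorem eq_zero_of_vecMul_eq_self {v : S → ℝ} (hv0 : 0 ≤ v) (hv : v ᵥ* P = v) {z : S}
    (hz : v z = 0) : v = 0 := by
  funext x
  obtain ⟨n, hn⟩ := hirr x z
  have hsum : ∑ y, v y * (P ^ n) y z = 0 := by
    rw [← hz, ← congrFun (vecMul_pow_eq_self hv n) z]
    rfl
  have hterm := (sum_eq_zero_iff_of_nonneg fun y _ =>
    mul_nonneg (hv0 y) (nonneg_of_mem_rowStochastic (pow_mem hP n))).1 hsum x (mem_univ x)
  exact (mul_eq_zero.1 hterm).resolve_right hn.ne'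

theorem pos_of_vecMul_eq_self {v : S → ℝ} (hv0 : 0 ≤ v) (hv : v ᵥ* P = v) (hne : v ≠ 0)
    (x : S) : 0 < v x :=
  (hv0 x).lt_of_ne' fun hx => hne (eq_zero_of_vecMul_eq_self hP hirr hv0 hv hx)

theorem eq_smul_of_vecMul_eq_self {π : S → ℝ} (hπ : ∀ x, 0 < π x) (hπP : π ᵥ* P = π)
    {v : S → ℝ} (hv : v ᵥ* P = v) : ∃ c : ℝ, v = c • π := by
  cases isEmpty_or_nonempty S
  · exact ⟨0, Subsingleton.elim _ _⟩
  obtain ⟨c, hc0, z, hz⟩ := exists_nonneg_sub_smul_eq_zero hπ v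
  refine ⟨c, sub_eq_zero.1 (eq_zero_of_vecMul_eq_self hP hirr hc0 ?_ hz)⟩
  rw [sub_vecMul, smul_vecMul, hv, hπP]

theorem eq_zero_of_mul_vecMul_eq_self {q e : S → ℝ} (hq0 : 0 ≤ q) (he0 : 0 ≤ e)
    (he : ((1 - q) * e) ᵥ* P = e) {z : S} (hz : 0 < q z) : e = 0 := by
  -- `P` preserves total mass, so the mass `∑ q e` removed by the factor `1 - q` is zero.
  have hqe : ∑ x, q x * e x = 0 := by
    have := sum_vecMul_of_mem_rowStochastic hP ((1 - q) * e)
    rw [he] at this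
    simp only [Pi.mul_apply, Pi.sub_apply, Pi.one_apply, sub_mul, one_mul,
      sum_sub_distrib] at this
    linarith
  have hqe0 (x : S) : q x * e x = 0 :=
    (sum_eq_zero_iff_of_nonneg fun x _ => mul_nonneg (hq0 x) (he0 x)).1 hqe x (mem_univ x)
  have hinv : e ᵥ* P = e := by
    convert he using 2
    funext x
    simp [sub_mul, hqe0]
  exact eq_zero_of_vecMul_eq_self hP hirr he0 hinv ((mul_eq_zero.1 (hqe0 z)).resolve_left hz.ne')

end Matrix

namespace StoppingRule

section Accounting

variable {S : Type*} [Fintype S] {P : Matrix S S ℝ} {μ : S → ℝ} (R : StoppingRule P μ)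

def survival (t : ℕ) : ℝ := ∑ x, R.θ t x

def stopMass (t : ℕ) : ℝ := ∑ x, R.σ t x

def exitFreq (y : S) : ℝ := ∑' t, (R.θ t y - R.σ t y)

theorem θ_succ_eq_vecMul (t : ℕ) : R.θ (t + 1) = (R.θ t - R.σ t) ᵥ* P :=
  funext (R.θ_succ t)

theorem exitFreq_nonneg (y : S) : 0 ≤ R.exitFreq y :=
  tsum_nonneg fun t => sub_nonneg.2 (R.σ_le t y)

variable [DecidableEq S] (hP : P ∈ rowStochastic ℝ S)
include hP

theorem θ_nonneg (hμ : 0 ≤ μ) (t : ℕ) (x : S) : 0 ≤ R.θ t x := by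
  induction t generalizing x with
  | zero => rw [R.θ_zero]; exact hμ x
  | succ t ih =>
    rw [θ_succ_eq_vecMul]
    exact nonneg_vecMul_of_mem_rowStochastic hP (fun x => sub_nonneg.2 (R.σ_le t x)) x

theorem survival_succ (t : ℕ) : R.survival (t + 1) = R.survival t - R.stopMass t := by
  rw [survival, θ_succ_eq_vecMul, sum_vecMul_of_mem_rowStochastic hP, Pi.sub_def, sum_sub_distrib]
  rfl

variable (hμ : μ ∈ stdSimplex ℝ S)
include hμ

theorem sum_range_stopMass (n : ℕ) : ∑ t ∈ range n, R.stopMass t = 1 - R.survival n := by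
  induction n with
  | zero => simp [survival, R.θ_zero, hμ.2]
  | succ n ih => rw [sum_range_succ, ih, R.survival_succ hP]; ring

theorem survival_nonneg (t : ℕ) : 0 ≤ R.survival t :=
  sum_nonneg fun x _ => R.θ_nonneg hP hμ.1 t x

theorem summable_stopMass : Summable R.stopMass :=
  summable_of_sum_range_le (c := 1) (fun t => sum_nonneg fun x _ => R.σ_nonneg t x)
    fun n => by linarith [R.sum_range_stopMass hP hμ n, R.survival_nonneg hP hμ n]

theorem summable_σ (y : S) : Summable fun t => R.σ t y :=
  (R.summable_stopMass hP hμ).of_nonneg_of_le (fun t => R.σ_nonneg t y)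
    fun t => single_le_sum (fun x _ => R.σ_nonneg t x) (mem_univ y)

theorem tsum_stopMass_eq_one {ρ : S → ℝ} (hρ : ∑ y, ρ y = 1)
    (hterm : ∀ y, ∑' t, R.σ t y = ρ y) : ∑' t, R.stopMass t = 1 := by
  simp only [stopMass]
  rw [Summable.tsum_finsetSum fun y _ => R.summable_σ hP hμ y]
  simp [hterm, hρ]

variable {R}

theorem survival_eq_tsum (hstop : ∑' t, R.stopMass t = 1) (n : ℕ) :
    R.survival n = ∑' t, R.stopMass (t + n) := by
  have := (R.summable_stopMass hP hμ).sum_add_tsum_nat_add n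
  linarith [R.sum_range_stopMass hP hμ n]

theorem stopExp_eq_tsum_survival (hstop : ∑' t, R.stopMass t = 1) :
    stopExp R = ∑' t, ENNReal.ofReal (R.survival (t + 1)) := by
  rw [stopExp, ENNReal.tsum_nat_mul_eq_tsum_tsum_add]
  refine tsum_congr fun k => ?_
  rw [survival_eq_tsum hP hμ hstop]
  have hnonneg (t : ℕ) : 0 ≤ R.stopMass (t + (k + 1)) := sum_nonneg fun x _ => R.σ_nonneg _ x
  have hsum : Summable fun t => R.stopMass (t + (k + 1)) :=
    (summable_nat_add_iff (k + 1)).2 (R.summable_stopMass hP hμ)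
  rw [ENNReal.ofReal_tsum_of_nonneg hnonneg hsum]
  rfl

theorem summable_survival_of_stopExp_ne_top (hstop : ∑' t, R.stopMass t = 1)
    (hfin : stopExp R ≠ ⊤) : Summable R.survival := by
  rw [stopExp_eq_tsum_survival hP hμ hstop] at hfin
  refine (summable_nat_add_iff 1).1 ((ENNReal.summable_toReal hfin).congr fun t => ?_)
  exact ENNReal.toReal_ofReal (R.survival_nonneg hP hμ _)

variable (hsurv : Summable R.survival)
include hsurv

theorem summable_θ (y : S) : Summable fun t => R.θ t y :=
  hsurv.of_nonneg_of_le (fun t => R.θ_nonneg hP hμ.1 t y)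
    fun t => single_le_sum (fun x _ => R.θ_nonneg hP hμ.1 t x) (mem_univ y)

theorem summable_θ_sub_σ (y : S) : Summable fun t => R.θ t y - R.σ t y :=
  (summable_θ hP hμ hsurv y).sub (R.summable_σ hP hμ y)

theorem exitFreq_add_tsum_σ (y : S) :
    R.exitFreq y + ∑' t, R.σ t y = μ y + (R.exitFreq ᵥ* P) y := by
  have hvisits : ∑' t, R.θ (t + 1) y = (R.exitFreq ᵥ* P) y := by
    simp only [R.θ_succ, vecMul, dotProduct, exitFreq]
    rw [Summable.tsum_finsetSum fun x _ => (summable_θ_sub_σ hP hμ hsurv x).mul_right _]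
    exact sum_congr rfl fun x _ => tsum_mul_right
  rw [exitFreq, ← (summable_θ_sub_σ hP hμ hsurv y).tsum_add (R.summable_σ hP hμ y),
    ← R.θ_zero y, ← hvisits]
  simp only [sub_add_cancel]
  exact (summable_θ hP hμ hsurv y).tsum_eq_zero_add

theorem sum_exitFreq : ∑ y, R.exitFreq y = ∑' t, R.survival (t + 1) := by
  simp only [exitFreq, R.survival_succ hP]
  rw [← Summable.tsum_finsetSum fun y _ => summable_θ_sub_σ hP hμ hsurv y]
  simp only [sum_sub_distrib]
  rfl

theorem stopExp_eq_ofReal_sum_exitFreq (hstop : ∑' t, R.stopMass t = 1) :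
    stopExp R = ENNReal.ofReal (∑ y, R.exitFreq y) := by
  rw [stopExp_eq_tsum_survival hP hμ hstop, sum_exitFreq hP hμ hsurv,
    ENNReal.ofReal_tsum_of_nonneg (fun t => R.survival_nonneg hP hμ _)
      ((summable_nat_add_iff 1).2 hsurv)]

end Accounting

section StopProb

variable {S : Type*} [Fintype S] {P : Matrix S S ℝ} {μ p : S → ℝ}

def stopProbMass (P : Matrix S S ℝ) (μ p : S → ℝ) : ℕ → S → ℝ
  | 0 => μ
  | t + 1 => ((1 - p) * stopProbMass P μ p t) ᵥ* P

theorem tsum_stopProbMass_eq (hsumm : ∀ y, Summable fun t => stopProbMass P μ p t y) (y : S) :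
    ∑' t, stopProbMass P μ p t y
      = μ y + (((1 - p) * fun x => ∑' t, stopProbMass P μ p t x) ᵥ* P) y := by
  rw [(hsumm y).tsum_eq_zero_add]
  congr 1
  simp only [stopProbMass, vecMul, dotProduct, Pi.mul_apply, Pi.sub_apply, Pi.one_apply]
  rw [Summable.tsum_finsetSum fun x _ => ((hsumm x).mul_left _).mul_right _]
  exact sum_congr rfl fun x _ => by rw [tsum_mul_right, tsum_mul_left]

variable [DecidableEq S] (hP : P ∈ rowStochastic ℝ S)
include hP

theorem stopProbMass_nonneg (hμ : 0 ≤ μ) (hp : p ≤ 1) : ∀ t, 0 ≤ stopProbMass P μ p t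
  | 0 => hμ
  | t + 1 => nonneg_vecMul_of_mem_rowStochastic hP fun x =>
      mul_nonneg (sub_nonneg.2 (hp x)) (stopProbMass_nonneg hμ hp t x)

def ofStopProb (hμ : 0 ≤ μ) (hp0 : 0 ≤ p) (hp1 : p ≤ 1) : StoppingRule P μ where
  θ := stopProbMass P μ p
  σ t := p * stopProbMass P μ p t
  σ_nonneg t x := mul_nonneg (hp0 x) (stopProbMass_nonneg hP hμ hp1 t x)
  σ_le t x := mul_le_of_le_one_left (stopProbMass_nonneg hP hμ hp1 t x) (hp1 x)
  θ_zero _ := rfl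
  θ_succ t y := by
    simp only [stopProbMass, vecMul, dotProduct, Pi.mul_apply, Pi.sub_apply, Pi.one_apply]
    exact sum_congr rfl fun x _ => by ring

theorem sum_range_stopProbMass_le (hp : p ≤ 1) {β : S → ℝ} (hβ0 : 0 ≤ β)
    (hβ : μ + ((1 - p) * β) ᵥ* P ≤ β) (n : ℕ) : ∑ t ∈ range n, stopProbMass P μ p t ≤ β := by
  induction n with
  | zero => simpa using hβ0
  | succ n ih =>
    rw [sum_range_succ', add_comm]
    simp only [stopProbMass, ← sum_vecMul, ← mul_sum]
    refine le_trans (add_le_add le_rfl (vecMul_mono_of_mem_rowStochastic hP fun x => ?_)) hβ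
    exact mul_le_mul_of_nonneg_left (by simpa using ih x) (sub_nonneg.2 (hp x))

theorem hasSum_stopProbMass (hirr : ∀ x y, ∃ n, 0 < (P ^ n) x y) (hμ : 0 ≤ μ) (hp0 : 0 ≤ p)
    (hp1 : p ≤ 1) {z : S} (hz : 0 < p z) {β : S → ℝ} (hβ0 : 0 ≤ β)
    (hβ : μ + ((1 - p) * β) ᵥ* P = β) (y : S) :
    HasSum (fun t => stopProbMass P μ p t y) (β y) := by
  have hpartial := sum_range_stopProbMass_le hP hp1 hβ0 hβ.le
  have hsumm (x : S) : Summable fun t => stopProbMass P μ p t x :=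
    summable_of_sum_range_le (fun t => stopProbMass_nonneg hP hμ hp1 t x)
      fun n => by simpa using hpartial n x
  set m : S → ℝ := fun x => ∑' t, stopProbMass P μ p t x
  have hmβ : m ≤ β := fun x =>
    (hsumm x).tsum_le_of_sum_range_le fun n => by simpa using hpartial n x
  have hm : m = μ + ((1 - p) * m) ᵥ* P := funext (tsum_stopProbMass_eq hsumm)
  have hdefect : ((1 - p) * (β - m)) ᵥ* P = β - m := by
    rw [mul_sub, sub_vecMul]
    linear_combination hβ + hm
  have hmeq : β - m = 0 :=
    eq_zero_of_mul_vecMul_eq_self hP hirr hp0 (sub_nonneg.2 hmβ) hdefect hz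
  have hmy : m y = β y := congrFun (sub_eq_zero.1 hmeq).symm y
  exact hmy ▸ (hsumm y).hasSum

end StopProb

variable {S : Type*} [Fintype S] [DecidableEq S] {P : Matrix S S ℝ} {μ ρ : S → ℝ}

theorem exists_exitFreq_eq (hP : P ∈ rowStochastic ℝ S) (hirr : ∀ x y, ∃ n, 0 < (P ^ n) x y)
    (hμ : 0 ≤ μ) (hρ : ρ ∈ stdSimplex ℝ S) {ν : S → ℝ} (hν : 0 ≤ ν)
    (hcons : ν + ρ = μ + ν ᵥ* P) :
    ∃ R : StoppingRule P μ, (∀ y, ∑' t, R.σ t y = ρ y) ∧ Summable R.survival ∧ R.exitFreq = ν := by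
  obtain ⟨hρ0, hρ1⟩ := hρ
  -- Where `ν + ρ` vanishes so does `ρ`, so the junk value `ρ x / 0 = 0` is harmless.
  obtain ⟨p, hp⟩ : ∃ p, p = ρ / (ν + ρ) := ⟨_, rfl⟩
  have hνρ : 0 ≤ ν + ρ := add_nonneg hν hρ0
  have hp0 : 0 ≤ p := fun x => hp ▸ div_nonneg (hρ0 x) (hνρ x)
  have hp1 : p ≤ 1 := fun x => hp ▸ div_le_one_of_le₀ (le_add_of_nonneg_left (hν x)) (hνρ x)
  have hpρ : p * (ν + ρ) = ρ := hp ▸ funext fun x => div_mul_cancel_of_imp fun h => by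
    linarith [show 0 ≤ ν x from hν x, hρ0 x, show ν x + ρ x = 0 from h]
  have hqν : (1 - p) * (ν + ρ) = ν := by rw [sub_mul, hpρ, one_mul, add_sub_cancel_right]
  obtain ⟨z, hz⟩ : ∃ z, 0 < ρ z := by
    by_contra! h
    linarith [sum_nonpos fun x (_ : x ∈ univ) => h x]
  have hpz : 0 < p z := hp ▸ div_pos hz (by linarith [show 0 ≤ ν z from hν z] : 0 < ν z + ρ z)
  have hmass := hasSum_stopProbMass hP hirr hμ hp0 hp1 hpz hνρ (by rw [hqν, hcons])
  refine ⟨ofStopProb hP hμ hp0 hp1, fun y => ?_, ?_, funext fun y => ?_⟩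
  · have := ((hmass y).mul_left (p y)).tsum_eq
    rwa [← Pi.mul_apply p, hpρ] at this
  · exact summable_sum fun y _ => (hmass y).summable
  · have := ((hmass y).mul_left (1 - p y)).tsum_eq
    rw [← Pi.one_apply (M := fun _ : S => ℝ) y, ← Pi.sub_apply, ← Pi.mul_apply (1 - p), hqν] at this
    rw [← this]
    exact tsum_congr fun t => by simp [ofStopProb]; ring

variable {π : S → ℝ} (hP : P ∈ rowStochastic ℝ S) (hirr : ∀ x y, ∃ n, 0 < (P ^ n) x y)
  (hπ : ∀ x, 0 < π x) (hπ1 : ∑ x, π x = 1) (hπP : π ᵥ* P = π) (hμ : μ ∈ stdSimplex ℝ S)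
include hP hirr hπ hπ1 hπP hμ

theorem stopExp_le_of_exitFreq_eq_zero (hρ1 : ∑ y, ρ y = 1) {R R' : StoppingRule P μ}
    (hR : ∀ y, ∑' t, R.σ t y = ρ y) (hR' : ∀ y, ∑' t, R'.σ t y = ρ y)
    (hsurv : Summable R.survival) {z : S} (hz : R.exitFreq z = 0) : stopExp R ≤ stopExp R' := by
  by_cases hfin' : stopExp R' = ⊤
  · exact hfin' ▸ le_top
  have hstop' := R'.tsum_stopMass_eq_one hP hμ hρ1 hR'
  have hsurv' := summable_survival_of_stopExp_ne_top hP hμ hstop' hfin'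
  have hinv : (R'.exitFreq - R.exitFreq) ᵥ* P = R'.exitFreq - R.exitFreq := by
    funext y
    have h := exitFreq_add_tsum_σ hP hμ hsurv y
    have h' := exitFreq_add_tsum_σ hP hμ hsurv' y
    rw [hR] at h
    rw [hR'] at h'
    rw [sub_vecMul, Pi.sub_apply, Pi.sub_apply]
    linarith
  obtain ⟨c, hc⟩ := eq_smul_of_vecMul_eq_self hP hirr hπ hπP hinv
  have hc0 : 0 ≤ c := by
    have := congrFun hc z
    simp only [Pi.sub_apply, hz, sub_zero, Pi.smul_apply, smul_eq_mul] at this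
    exact nonneg_of_mul_nonneg_left (this ▸ R'.exitFreq_nonneg z) (hπ z)
  have hsum : ∑ y, R'.exitFreq y - ∑ y, R.exitFreq y = c := by
    rw [← sum_sub_distrib]
    simp only [← Pi.sub_apply, hc, Pi.smul_apply, smul_eq_mul, ← mul_sum, hπ1, mul_one]
  rw [stopExp_eq_ofReal_sum_exitFreq hP hμ hsurv (R.tsum_stopMass_eq_one hP hμ hρ1 hR),
    stopExp_eq_ofReal_sum_exitFreq hP hμ hsurv' hstop']
  exact ENNReal.ofReal_le_ofReal (by linarith)

theorem exists_stopExp_lt_of_exitFreq_pos (hρ : ρ ∈ stdSimplex ℝ S) {R : StoppingRule P μ}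
    (hR : ∀ y, ∑' t, R.σ t y = ρ y) (hsurv : Summable R.survival)
    (hpos : ∀ z, 0 < R.exitFreq z) :
    ∃ R' : StoppingRule P μ, (∀ y, ∑' t, R'.σ t y = ρ y) ∧ stopExp R' < stopExp R := by
  have : Nonempty S := by
    by_contra h
    rw [not_nonempty_iff] at h
    simp at hπ1
  obtain ⟨c, hc0, z, hz⟩ := exists_nonneg_sub_smul_eq_zero hπ R.exitFreq
  have hcpos : 0 < c := by
    simp only [Pi.sub_apply, Pi.smul_apply, smul_eq_mul, sub_eq_zero] at hz
    exact pos_of_mul_pos_left (hz ▸ hpos z) (hπ z).le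
  have hcons : (R.exitFreq - c • π) + ρ = μ + (R.exitFreq - c • π) ᵥ* P := by
    funext y
    have h := exitFreq_add_tsum_σ hP hμ hsurv y
    rw [hR] at h
    rw [sub_vecMul, smul_vecMul, hπP]
    simp only [Pi.add_apply, Pi.sub_apply, Pi.smul_apply, smul_eq_mul]
    linarith
  obtain ⟨R', hR', hsurv', hν'⟩ := exists_exitFreq_eq hP hirr hμ.1 hρ hc0 hcons
  refine ⟨R', hR', ?_⟩
  have hsum : ∑ y, R'.exitFreq y = ∑ y, R.exitFreq y - c := by
    simp only [hν', Pi.sub_apply, Pi.smul_apply, smul_eq_mul, sum_sub_distrib, ← mul_sum, hπ1,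
      mul_one]
  have hν'0 : 0 ≤ ∑ y, R'.exitFreq y := sum_nonneg fun y _ => R'.exitFreq_nonneg y
  rw [stopExp_eq_ofReal_sum_exitFreq hP hμ hsurv (R.tsum_stopMass_eq_one hP hμ hρ.2 hR),
    stopExp_eq_ofReal_sum_exitFreq hP hμ hsurv' (R'.tsum_stopMass_eq_one hP hμ hρ.2 hR')]
  exact ENNReal.ofReal_lt_ofReal_iff'.2 ⟨by linarith, by linarith⟩

end StoppingRule

/-- Lovász–Winkler: a stopping time `S` of a finite irreducible chain
started from `μ` with terminal distribution `ρ` and finite expectation is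
mean-optimal (its expectation equals the infimum over all stopping times from `μ`
with terminal distribution `ρ`) if and only if it has a halting state, i.e. a state
`z` with exit frequency `ν_z = ∑_t (θ_t(z) − σ_t(z)) = 0`. -/
theorem claim_lovasz_winkler {S : Type*} [Fintype S] [DecidableEq S]
    (P : Matrix S S ℝ) (π : S → ℝ)
    (hP0 : ∀ x y, 0 ≤ P x y) (hP1 : ∀ x, ∑ y, P x y = 1)
    (hirr : ∀ x y, ∃ n, 0 < (P ^ n) x y)
    (hπ0 : ∀ x, 0 ≤ π x) (hπ1 : ∑ x, π x = 1)
    (hπP : ∀ y, ∑ x, π x * P x y = π y)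
    (μ ρ : S → ℝ)
    (hμ0 : ∀ x, 0 ≤ μ x) (hμ1 : ∑ x, μ x = 1)
    (hρ0 : ∀ x, 0 ≤ ρ x) (hρ1 : ∑ x, ρ x = 1)
    (R : StoppingRule P μ)
    (hterm : ∀ y, ∑' t, R.σ t y = ρ y)
    (hfin : stopExp R ≠ ⊤) :
    stopExp R
        = (⨅ R' : {R' : StoppingRule P μ // ∀ y, ∑' t, R'.σ t y = ρ y}, stopExp R'.1)
      ↔ ∃ z, (∑' t, (R.θ t z - R.σ t z)) = 0 := by
  have hP : P ∈ rowStochastic ℝ S := mem_rowStochastic_iff_sum.2 ⟨hP0, hP1⟩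
  have hμ : μ ∈ stdSimplex ℝ S := ⟨hμ0, hμ1⟩
  have hπP' : π ᵥ* P = π := funext hπP
  have hπ : ∀ x, 0 < π x := pos_of_vecMul_eq_self hP hirr hπ0 hπP' fun h => by simp [h] at hπ1
  have hsurv := R.summable_survival_of_stopExp_ne_top hP hμ
    (R.tsum_stopMass_eq_one hP hμ hρ1 hterm) hfin
  constructor
  · intro hopt
    by_contra! hpos
    obtain ⟨R', hR', hlt⟩ := StoppingRule.exists_stopExp_lt_of_exitFreq_pos hP hirr hπ hπ1 hπP'
      hμ ⟨hρ0, hρ1⟩ hterm hsurv fun z => (R.exitFreq_nonneg z).lt_of_ne' (hpos z)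
    rw [hopt] at hlt
    exact hlt.not_ge (iInf_le_of_le ⟨R', hR'⟩ le_rfl)
  · rintro ⟨z, hz⟩
    refine le_antisymm (le_iInf fun R' => ?_) (iInf_le_of_le ⟨R, hterm⟩ le_rfl)
    exact StoppingRule.stopExp_le_of_exitFreq_eq_zero hP hirr hπ hπ1 hπP' hμ hρ1 hterm R'.2
      hsurv hz
end
end

section
/- Variant of Kac's lemma: let X be a finite irreducible Markov chain with stationary distribution π, A a subset of states, k ≥ 1, and τ_A^{(k)} = min{t ≥ k : X_t ∈ A}. Then ∑_{x ∈ A} π(x) E_x[τ_A^{(k)}] ≤ k. -/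
open scoped BigOperators

/-- variant of Kac's lemma: for a finite irreducible chain with
stationary distribution `π`, a set `A`, and `k ≥ 1`, one has
`∑_{x∈A} π(x) E_x[τ_A^{(k)}] ≤ k`, where `τ_A^{(k)} = min{t ≥ k : X_t ∈ A}`.
Here `h x = E_x[τ_A]` is characterized by the usual hitting-time equations, and
`E_x[τ_A^{(k)}] = k + ∑_y P^k(x,y) h(y)`. -/
theorem claim_kac {S : Type*} [Fintype S] [DecidableEq S]
    (P : Matrix S S ℝ) (π : S → ℝ)
    (hP0 : ∀ x y, 0 ≤ P x y) (hP1 : ∀ x, ∑ y, P x y = 1)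
    (hirr : ∀ x y, ∃ n, 0 < (P ^ n) x y)
    (hπ0 : ∀ x, 0 ≤ π x) (hπ1 : ∑ x, π x = 1)
    (hπP : ∀ y, ∑ x, π x * P x y = π y)
    (A : Finset S) (k : ℕ) (hk : 1 ≤ k)
    (h : S → ℝ)
    (hhA : ∀ x ∈ A, h x = 0)
    (hrec : ∀ x ∉ A, h x = 1 + ∑ y, P x y * h y) :
    ∑ x ∈ A, π x * ((k : ℝ) + ∑ y, (P ^ k) x y * h y) ≤ (k : ℝ) := by
  classical
  have hSne : Nonempty S := by
    by_contra hS
    rw [not_nonempty_iff] at hS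
    rw [Finset.univ_eq_empty, Finset.sum_empty] at hπ1
    norm_num at hπ1
  -- h is nonnegative
  have hh0 : ∀ x, 0 ≤ h x := by
    obtain ⟨x0, -, hx0⟩ := Finset.exists_min_image Finset.univ h
      ⟨Classical.arbitrary S, Finset.mem_univ _⟩
    have hmin : ∀ y, h x0 ≤ h y := fun y => hx0 y (Finset.mem_univ y)
    have hx0A : x0 ∈ A := by
      by_contra hx
      have h1 : h x0 = 1 + ∑ y, P x0 y * h y := hrec x0 hx
      have h2 : h x0 ≤ ∑ y, P x0 y * h y := by
        calc h x0 = ∑ y, P x0 y * h x0 := by rw [← Finset.sum_mul, hP1, one_mul]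
        _ ≤ ∑ y, P x0 y * h y :=
          Finset.sum_le_sum fun y _ => mul_le_mul_of_nonneg_left (hmin y) (hP0 _ _)
      linarith
    intro x
    have := hmin x
    rw [hhA x0 hx0A] at this
    exact this
  -- powers of P are row-stochastic with nonnegative entries
  have hPn0 : ∀ n x y, 0 ≤ (P ^ n) x y := by
    intro n
    induction n with
    | zero =>
      intro x y
      rw [pow_zero]
      by_cases hxy : x = y <;> simp [Matrix.one_apply, hxy]
    | succ n ih =>
      intro x y
      rw [pow_succ, Matrix.mul_apply]
      exact Finset.sum_nonneg fun z _ => mul_nonneg (ih x z) (hP0 z y)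
  have hPn1 : ∀ n x, ∑ y, (P ^ n) x y = 1 := by
    intro n
    induction n with
    | zero => intro x; simp [Matrix.one_apply]
    | succ n ih =>
      intro x
      simp only [pow_succ, Matrix.mul_apply]
      rw [Finset.sum_comm]
      calc ∑ z, ∑ y, (P ^ n) x z * P z y = ∑ z, (P ^ n) x z * ∑ y, P z y := by
            simp [Finset.mul_sum]
        _ = 1 := by simp [hP1, ih]
  -- stationarity of powers
  have hπPn : ∀ n y, ∑ x, π x * (P ^ n) x y = π y := by
    intro n
    induction n with
    | zero =>
      intro y
      simp [Matrix.one_apply, Finset.sum_ite_eq, mul_ite]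
    | succ n ih =>
      intro y
      simp only [pow_succ, Matrix.mul_apply, Finset.mul_sum]
      rw [Finset.sum_comm]
      calc ∑ z, ∑ x, π x * ((P ^ n) x z * P z y)
          = ∑ z, (∑ x, π x * (P ^ n) x z) * P z y := by
            congr 1; funext z; rw [Finset.sum_mul]; congr 1; funext x; ring
        _ = ∑ z, π z * P z y := by simp [ih]
        _ = π y := hπP y
  -- averaging a function against π ∘ P^n gives the π-average
  have havg : ∀ (n : ℕ) (f : S → ℝ),
      ∑ x, π x * (∑ y, (P ^ n) x y * f y) = ∑ y, π y * f y := by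
    intro n f
    calc ∑ x, π x * (∑ y, (P ^ n) x y * f y)
        = ∑ x, ∑ y, π x * (P ^ n) x y * f y := by
          congr 1; funext x; rw [Finset.mul_sum]; congr 1; funext y; ring
      _ = ∑ y, (∑ x, π x * (P ^ n) x y) * f y := by
          rw [Finset.sum_comm]; congr 1; funext y; rw [Finset.sum_mul]
      _ = ∑ y, π y * f y := by simp [hπPn]
  -- the function u = Ph - h
  set u : S → ℝ := fun z => (∑ y, P z y * h y) - h z with hu
  have hu_ge : ∀ z, -1 ≤ u z := by
    intro z
    by_cases hz : z ∈ A
    · have : 0 ≤ ∑ y, P z y * h y :=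
        Finset.sum_nonneg fun y _ => mul_nonneg (hP0 z y) (hh0 y)
      simp only [hu, hhA z hz]
      linarith
    · simp only [hu]
      rw [hrec z hz]
      linarith
  have hπu : ∑ z, π z * u z = 0 := by
    have h1 : ∑ z, π z * (∑ y, P z y * h y) = ∑ y, π y * h y := by
      have := havg 1 h
      simpa [pow_one] using this
    simp only [hu, mul_sub]
    rw [Finset.sum_sub_distrib, h1, sub_self]
  -- pointwise decomposition: P^{n+1} h = P^n h + P^n u
  have hstep : ∀ (n : ℕ) (x : S),
      ∑ y, (P ^ (n + 1)) x y * h y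
        = (∑ y, (P ^ n) x y * h y) + ∑ z, (P ^ n) x z * u z := by
    intro n x
    have : ∑ y, (P ^ (n + 1)) x y * h y = ∑ z, (P ^ n) x z * (∑ y, P z y * h y) := by
      simp only [pow_succ, Matrix.mul_apply, Finset.sum_mul, Finset.mul_sum]
      rw [Finset.sum_comm]
      congr 1; funext z; congr 1; funext y; ring
    rw [this]
    simp only [hu, mul_sub]
    rw [Finset.sum_sub_distrib]
    ring
  -- the key quantity
  set T : ℕ → ℝ := fun j => ∑ x ∈ A, π x * (∑ y, (P ^ j) x y * h y) with hT
  have hT0 : T 0 = 0 := by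
    simp only [hT, pow_zero]
    apply Finset.sum_eq_zero
    intro x hx
    have : ∑ y, (1 : Matrix S S ℝ) x y * h y = h x := by
      simp [Matrix.one_apply]
    rw [this, hhA x hx, mul_zero]
  have hTstep : ∀ j, T (j + 1) ≤ T j + (1 - ∑ x ∈ A, π x) := by
    intro j
    have hdiff : T (j + 1) = T j + ∑ x ∈ A, π x * (∑ z, (P ^ j) x z * u z) := by
      simp only [hT]
      rw [← Finset.sum_add_distrib]
      congr 1; funext x
      rw [hstep j x, mul_add]
    rw [hdiff]
    have hfull : ∑ x, π x * (∑ z, (P ^ j) x z * u z) = 0 := by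
      rw [havg j u, hπu]
    have hsplit : ∑ x ∈ A, π x * (∑ z, (P ^ j) x z * u z)
        + ∑ x ∈ Aᶜ, π x * (∑ z, (P ^ j) x z * u z)
        = ∑ x, π x * (∑ z, (P ^ j) x z * u z) :=
      Finset.sum_add_sum_compl A _
    have hlb : ∀ x, -(π x) ≤ π x * (∑ z, (P ^ j) x z * u z) := by
      intro x
      have h1 : (-1 : ℝ) ≤ ∑ z, (P ^ j) x z * u z := by
        calc (-1 : ℝ) = ∑ z, (P ^ j) x z * (-1) := by
              rw [← Finset.sum_mul, hPn1 j x]; ring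
          _ ≤ ∑ z, (P ^ j) x z * u z :=
            Finset.sum_le_sum fun z _ =>
              mul_le_mul_of_nonneg_left (hu_ge z) (hPn0 j x z)
      calc -(π x) = π x * (-1) := by ring
        _ ≤ π x * (∑ z, (P ^ j) x z * u z) :=
          mul_le_mul_of_nonneg_left h1 (hπ0 x)
    have hcompl : -(∑ x ∈ Aᶜ, π x) ≤ ∑ x ∈ Aᶜ, π x * (∑ z, (P ^ j) x z * u z) := by
      rw [← Finset.sum_neg_distrib]
      exact Finset.sum_le_sum fun x _ => hlb x
    have hπA : ∑ x ∈ A, π x + ∑ x ∈ Aᶜ, π x = 1 := by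
      rw [Finset.sum_add_sum_compl A π, hπ1]
    have : ∑ x ∈ A, π x * (∑ z, (P ^ j) x z * u z) ≤ ∑ x ∈ Aᶜ, π x := by
      have := hsplit.trans hfull
      linarith [hcompl]
    linarith
  have hTk : ∀ j, T j ≤ j * (1 - ∑ x ∈ A, π x) := by
    intro j
    induction j with
    | zero => simp [hT0]
    | succ j ih =>
      have := hTstep j
      push_cast
      linarith
  -- conclusion
  have hmain : ∑ x ∈ A, π x * ((k : ℝ) + ∑ y, (P ^ k) x y * h y)
      = (k : ℝ) * (∑ x ∈ A, π x) + T k := by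
    simp only [hT]
    rw [Finset.mul_sum, ← Finset.sum_add_distrib]
    congr 1; funext x; ring
  rw [hmain]
  have := hTk k
  nlinarith [hTk k]
end

section
/- If a transition matrix P satisfies P(x,x) ≥ δ for all x with 0 < δ < 1, then for every starting state x and every time t, ‖P^t(x,·) − P^{t+1}(x,·)‖ ≤ e^{−9tδ(1−δ)/16} + 12√2/√(tδ(1−δ)); in particular ‖P^t(x,·) − P^{t+1}(x,·)‖ ≤ C/√(tδ(1−δ)) for a universal constant C. -/
open scoped BigOperators ENNReal

noncomputable section

open Finset

set_option maxHeartbeats 1000000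

section Helpers
open Finset

noncomputable def Bf (n : ℕ) (p : ℝ) (k : ℕ) : ℝ := (n.choose k : ℝ) * p^k * (1-p)^(n-k)

lemma Bf_nonneg {p : ℝ} (hp0 : 0 ≤ p) (hp1 : p ≤ 1) (n k : ℕ) : 0 ≤ Bf n p k := by
  have h1 : (0:ℝ) ≤ 1 - p := by linarith
  unfold Bf; positivity

lemma Bf_zero {p : ℝ} {n k : ℕ} (h : n < k) : Bf n p k = 0 := by
  unfold Bf; rw [Nat.choose_eq_zero_of_lt h]; simp

lemma Bf_sum (n : ℕ) (p : ℝ) : ∑ k ∈ range (n+1), Bf n p k = 1 := by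
  calc ∑ k ∈ range (n+1), Bf n p k
      = ∑ k ∈ range (n+1), p^k * (1-p)^(n-k) * (n.choose k : ℝ) := by
        refine Finset.sum_congr rfl fun k _ => by unfold Bf; ring
    _ = (p + (1-p))^n := (add_pow p (1-p) n).symm
    _ = 1 := by norm_num

lemma Bf_pascal0 (n : ℕ) (p : ℝ) : Bf (n+1) p 0 = (1-p) * Bf n p 0 := by
  unfold Bf; simp [pow_succ]; ring

lemma Bf_pascal (n : ℕ) (p : ℝ) (k : ℕ) :
    Bf (n+1) p (k+1) = (1-p) * Bf n p (k+1) + p * Bf n p k := by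
  rcases lt_or_ge k n with h | h
  · unfold Bf
    rw [Nat.choose_succ_succ]
    push_cast [Nat.succ_eq_add_one]
    have h1 : n - k = (n - (k+1)) + 1 := by omega
    rw [h1, pow_succ]
    ring
  · by_cases hk : k = n
    · subst hk
      unfold Bf
      rw [Nat.choose_succ_succ, Nat.choose_eq_zero_of_lt (Nat.lt_succ_self k)]
      simp [Nat.choose_self]
      ring
    · rw [Bf_zero (by omega), Bf_zero (by omega), Bf_zero (by omega)]; ring

lemma Bf_ratio (n : ℕ) (p : ℝ) (k : ℕ) :
    ((k:ℝ)+1) * (1-p) * Bf n p (k+1) = ((n-k : ℕ):ℝ) * p * Bf n p k := by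
  rcases lt_or_ge k n with h | h
  · unfold Bf
    have h1 : n - k = (n - (k+1)) + 1 := by omega
    have h2 : (n.choose (k+1) : ℝ) * ((k:ℝ)+1) = (n.choose k : ℝ) * ((n - k : ℕ):ℝ) := by
      exact_mod_cast congrArg (Nat.cast (R := ℝ)) (Nat.choose_succ_right_eq n k)
    calc ((k:ℝ)+1) * (1-p) * ((n.choose (k+1) : ℝ) * p^(k+1) * (1-p)^(n-(k+1)))
        = ((n.choose (k+1) : ℝ) * ((k:ℝ)+1)) * p^(k+1) * ((1-p)^(n-(k+1)) * (1-p)) := by ring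
      _ = ((n.choose k : ℝ) * ((n - k : ℕ):ℝ)) * p^(k+1) * ((1-p)^(n-(k+1)) * (1-p)) := by
          rw [h2]
      _ = ((n-k : ℕ):ℝ) * p * ((n.choose k : ℝ) * p^k * (1-p)^(n-k)) := by
          rw [h1, pow_succ, pow_succ]; ring
  · rw [Bf_zero (by omega)]
    have h3 : n - k = 0 := by omega
    rw [h3]; simp

lemma Bf_succ_ge {p : ℝ} (hp0 : 0 < p) (hp1 : p < 1) {n k : ℕ}
    (h : (k:ℝ)+1 ≤ ((n:ℝ)+1)*p) : Bf n p k ≤ Bf n p (k+1) := by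
  have hkn : k < n := by
    by_contra hc
    push_neg at hc
    have : ((n:ℝ)+1)*p < (n:ℝ)+1 := by nlinarith [Nat.cast_nonneg (α := ℝ) n]
    have : ((k:ℝ)) + 1 < (n:ℝ) + 1 := lt_of_le_of_lt h this
    have : (n:ℝ) ≤ (k:ℝ) := by exact_mod_cast hc
    linarith
  have hcast : ((n-k : ℕ):ℝ) = (n:ℝ) - (k:ℝ) := by
    push_cast [Nat.cast_sub hkn.le]; ring
  have hid := Bf_ratio n p k
  rw [hcast] at hid
  have hB : 0 ≤ Bf n p k := Bf_nonneg hp0.le hp1.le n k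
  -- (k+1)(1-p) ≤ (n-k) p
  have hineq : ((k:ℝ)+1) * (1-p) ≤ ((n:ℝ)-(k:ℝ)) * p := by nlinarith
  have hpos : (0:ℝ) < ((k:ℝ)+1) * (1-p) := by
    have : (0:ℝ) < 1 - p := by linarith
    positivity
  nlinarith [mul_le_mul_of_nonneg_right hineq hB]

lemma Bf_succ_le {p : ℝ} (hp0 : 0 < p) (hp1 : p < 1) {n k : ℕ}
    (h : ((n:ℝ)+1)*p ≤ (k:ℝ)+1) : Bf n p (k+1) ≤ Bf n p k := by
  have hid := Bf_ratio n p k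
  have hB : 0 ≤ Bf n p k := Bf_nonneg hp0.le hp1.le n k
  have hpos : (0:ℝ) < ((k:ℝ)+1) * (1-p) := by
    have : (0:ℝ) < 1 - p := by linarith
    positivity
  have hineq : ((n-k : ℕ):ℝ) * p ≤ ((k:ℝ)+1) * (1-p) := by
    rcases lt_or_ge k n with hkn | hkn
    · have hcast : ((n-k : ℕ):ℝ) = (n:ℝ) - (k:ℝ) := by
        push_cast [Nat.cast_sub hkn.le]; ring
      rw [hcast]; nlinarith
    · have : n - k = 0 := by omega
      rw [this]; simp; positivity
  nlinarith [mul_le_mul_of_nonneg_right hineq hB]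

lemma tele_sum (f : ℕ → ℝ) (m N : ℕ) (hm : m ≤ N)
    (h0 : ∀ k, k < m → f k ≤ f (k+1)) (h1 : ∀ k, m ≤ k → f (k+1) ≤ f k) :
    ∑ k ∈ range N, |f (k+1) - f k| = (f m - f 0) + (f m - f N) := by
  rw [← Finset.sum_range_add_sum_Ico _ hm]
  have e1 : ∑ k ∈ range m, |f (k+1) - f k| = f m - f 0 := by
    rw [show (∑ k ∈ range m, |f (k+1) - f k|) = ∑ k ∈ range m, (f (k+1) - f k) from
      Finset.sum_congr rfl fun k hk => abs_of_nonneg (by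
        have := h0 k (Finset.mem_range.mp hk); linarith)]
    exact Finset.sum_range_sub f m
  have e2 : ∑ k ∈ Finset.Ico m N, |f (k+1) - f k| = f m - f N := by
    rw [show (∑ k ∈ Finset.Ico m N, |f (k+1) - f k|) = ∑ k ∈ Finset.Ico m N, (f k - f (k+1)) from
      Finset.sum_congr rfl fun k hk => by
        have := h1 k (Finset.mem_Ico.mp hk).1
        rw [abs_of_nonpos (by linarith)]; ring]
    rw [Finset.sum_Ico_eq_sum_range]
    have h3 := Finset.sum_range_sub' (fun i => f (m + i)) (N - m)
    simp only [add_zero] at h3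
    rw [show m + (N - m) = N from by omega] at h3
    rw [← h3]
    exact Finset.sum_congr rfl fun i _ => by rw [show m + i + 1 = m + (i+1) from by omega]
  rw [e1, e2]

lemma Bf_max_le (n : ℕ) (p : ℝ) (hp0 : 0 < p) (hp1 : p < 1)
    (hS : 288 < (n:ℝ)*p*(1-p)) :
    Bf n p (Nat.floor (((n:ℝ)+1)*p)) ≤ 3 / Real.sqrt ((n:ℝ)*p*(1-p)) := by
  have hq0 : (0:ℝ) < 1 - p := by linarith
  set S : ℝ := (n:ℝ)*p*(1-p) with hSdef
  set σ : ℝ := Real.sqrt S with hσdef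
  have hS0 : (0:ℝ) < S := by linarith
  have hσsq : σ^2 = S := Real.sq_sqrt hS0.le
  have hσ0 : 0 ≤ σ := Real.sqrt_nonneg S
  have hσ16 : 16 < σ := by nlinarith
  have hσS : σ ≤ S/16 := by nlinarith
  set m : ℕ := Nat.floor (((n:ℝ)+1)*p) with hmdef
  set J : ℕ := Nat.floor (σ/2) with hJdef
  have harg0 : (0:ℝ) ≤ ((n:ℝ)+1)*p := by positivity
  have hm_le : (m:ℝ) ≤ ((n:ℝ)+1)*p := Nat.floor_le harg0
  have hm_lt : ((n:ℝ)+1)*p < (m:ℝ)+1 := Nat.lt_floor_add_one _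
  have hnp : S ≤ (n:ℝ)*p := by
    have e : (n:ℝ)*p - S = (n:ℝ)*p*p := by rw [hSdef]; ring
    have : (0:ℝ) ≤ (n:ℝ)*p*p := by positivity
    linarith
  have hnq : S ≤ (n:ℝ)*(1-p) := by
    have e : (n:ℝ)*(1-p) - S = (n:ℝ)*(1-p)*(1-p) := by rw [hSdef]; ring
    have : (0:ℝ) ≤ (n:ℝ)*(1-p)*(1-p) := by positivity
    linarith
  have hqm : S - 1 ≤ (1-p)*(m:ℝ) := by
    have h := mul_lt_mul_of_pos_left hm_lt hq0
    have e : (1-p)*(((n:ℝ)+1)*p) = S + p*(1-p) := by rw [hSdef]; ring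
    have hpq : (0:ℝ) ≤ p*(1-p) := by positivity
    nlinarith
  have hmn : m ≤ n := by
    have hn1 : (0:ℝ) < (n:ℝ)+1 := by positivity
    have h2 : ((n:ℝ)+1)*p < (n:ℝ)+1 := mul_lt_of_lt_one_right hn1 hp1
    have : (m:ℝ) < (n:ℝ)+1 := lt_of_le_of_lt hm_le h2
    exact_mod_cast Nat.lt_succ_iff.mp (by exact_mod_cast this)
  have hnm : S - 1 ≤ (n:ℝ) - (m:ℝ) := by
    have e : ((n:ℝ)+1)*p = (n:ℝ)*p + p := by ring
    have e2 : (n:ℝ)*(1-p) = (n:ℝ) - (n:ℝ)*p := by ring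
    linarith
  have hJle : (J:ℝ) ≤ σ/2 := Nat.floor_le (by positivity)
  have hJgt : σ/2 < (J:ℝ)+1 := Nat.lt_floor_add_one _
  have hmJn : m + J ≤ n := by
    have h1 : (J:ℝ) ≤ (n:ℝ) - (m:ℝ) := by linarith
    have : ((m + J : ℕ):ℝ) ≤ (n:ℝ) := by push_cast; linarith
    exact_mod_cast this
  have hr : (m:ℝ)*(1-p) ≤ ((n:ℝ)-(m:ℝ)+1)*p := by
    have e : ((n:ℝ)+1)*p = (n:ℝ)*p + p := by ring
    nlinarith
  have hBm0 : 0 ≤ Bf n p m := Bf_nonneg hp0.le hp1.le n m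
  -- one-step ratio bound
  have hstep : ∀ i : ℕ, (i:ℝ)+1 ≤ σ/2 →
      Bf n p (m+i) * (1 - 2*((i:ℝ)+1)/S) ≤ Bf n p (m+i+1) := by
    intro i hi
    have hi0 : (0:ℝ) ≤ (i:ℝ) := Nat.cast_nonneg i
    have hmin : m + i < n := by
      have h1 : (i:ℝ) < (n:ℝ) - (m:ℝ) := by linarith
      have h2 : ((m+i:ℕ):ℝ) < (n:ℝ) := by push_cast; linarith
      exact_mod_cast h2
    have hcast : ((n-(m+i) : ℕ):ℝ) = (n:ℝ) - (m:ℝ) - (i:ℝ) := by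
      rw [Nat.cast_sub hmin.le]; push_cast; ring
    have hid := Bf_ratio n p (m+i)
    rw [hcast] at hid
    push_cast at hid
    have hBmi : 0 ≤ Bf n p (m+i) := Bf_nonneg hp0.le hp1.le n _
    have hMq : S/2 ≤ ((m:ℝ)+((i:ℝ)+1))*(1-p) := by
      have e : ((m:ℝ)+((i:ℝ)+1))*(1-p) = (1-p)*(m:ℝ) + ((i:ℝ)+1)*(1-p) := by ring
      have h2 : (0:ℝ) ≤ ((i:ℝ)+1)*(1-p) := by positivity
      linarith
    have hε1 : (i:ℝ)+1 ≤ (2*((i:ℝ)+1)/S) * (((m:ℝ)+((i:ℝ)+1))*(1-p)) := by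
      have h1 : (2*((i:ℝ)+1)/S) * (S/2) ≤ (2*((i:ℝ)+1)/S) * (((m:ℝ)+((i:ℝ)+1))*(1-p)) := by
        apply mul_le_mul_of_nonneg_left hMq
        positivity
      have h2 : (2*((i:ℝ)+1)/S) * (S/2) = (i:ℝ)+1 := by
        field_simp
      linarith
    have key : (1 - 2*((i:ℝ)+1)/S) * ((((m:ℝ)+(i:ℝ))+1)*(1-p)) ≤ ((n:ℝ)-(m:ℝ)-(i:ℝ))*p := by
      have ee : (1 - 2*((i:ℝ)+1)/S) * ((((m:ℝ)+(i:ℝ))+1)*(1-p))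
          = (m:ℝ)*(1-p) + ((i:ℝ)+1)*(1-p)
            - (2*((i:ℝ)+1)/S) * (((m:ℝ)+((i:ℝ)+1))*(1-p)) := by ring
      have ee2 : ((n:ℝ)-(m:ℝ)+1)*p = ((n:ℝ)-(m:ℝ)-(i:ℝ))*p + ((i:ℝ)+1)*p := by ring
      have ee3 : ((i:ℝ)+1)*(1-p) = ((i:ℝ)+1) - ((i:ℝ)+1)*p := by ring
      linarith
    have hpos : (0:ℝ) < (((m:ℝ)+(i:ℝ))+1)*(1-p) := by positivity
    have h4 := mul_le_mul_of_nonneg_left key hBmi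
    have h5 : Bf n p (m+i) * ((1 - 2*((i:ℝ)+1)/S) * ((((m:ℝ)+(i:ℝ))+1)*(1-p)))
        = (Bf n p (m+i) * (1 - 2*((i:ℝ)+1)/S)) * ((((m:ℝ)+(i:ℝ))+1)*(1-p)) := by ring
    have h6 : Bf n p (m+i) * (((n:ℝ)-(m:ℝ)-(i:ℝ))*p)
        = Bf n p (m+i+1) * ((((m:ℝ)+(i:ℝ))+1)*(1-p)) := by
      linear_combination -hid
    have h7 : (Bf n p (m+i) * (1 - 2*((i:ℝ)+1)/S)) * ((((m:ℝ)+(i:ℝ))+1)*(1-p))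
        ≤ Bf n p (m+i+1) * ((((m:ℝ)+(i:ℝ))+1)*(1-p)) := by
      rw [← h6, ← h5]; exact h4
    exact le_of_mul_le_mul_right h7 hpos
  -- induction: plateau lower bound
  have hind : ∀ i : ℕ, i ≤ J →
      Bf n p m * (1 - (i:ℝ)*((i:ℝ)+1)/S) ≤ Bf n p (m+i) := by
    intro i hi
    induction i with
    | zero => simp
    | succ i ih =>
      have hiJ : i ≤ J := by omega
      have ih' := ih hiJ
      have hu : (i:ℝ)+1 ≤ σ/2 := by
        have h1 : ((i:ℕ):ℝ)+1 ≤ (J:ℝ) := by exact_mod_cast hi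
        linarith
      have hst := hstep i hu
      have hε0 : (0:ℝ) ≤ 2*((i:ℝ)+1)/S := by positivity
      have hε1 : 2*((i:ℝ)+1)/S ≤ 1 := by
        rw [div_le_one hS0]; linarith
      have h5 : Bf n p m * (1 - (i:ℝ)*((i:ℝ)+1)/S) * (1 - 2*((i:ℝ)+1)/S)
          ≤ Bf n p (m+i) * (1 - 2*((i:ℝ)+1)/S) :=
        mul_le_mul_of_nonneg_right ih' (by linarith)
      have hcS : (0:ℝ) ≤ ((i:ℝ)*((i:ℝ)+1)/S) * (2*((i:ℝ)+1)/S) := by positivity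
      have h6 : Bf n p m * (1 - ((i:ℝ)+1)*((i:ℝ)+2)/S)
          ≤ Bf n p m * (1 - (i:ℝ)*((i:ℝ)+1)/S) * (1 - 2*((i:ℝ)+1)/S) := by
      -- (1-c)(1-e) = 1-(c+e) + ce and c+e = (i+1)(i+2)/S
        have e : Bf n p m * (1 - (i:ℝ)*((i:ℝ)+1)/S) * (1 - 2*((i:ℝ)+1)/S)
            = Bf n p m * (1 - ((i:ℝ)+1)*((i:ℝ)+2)/S)
              + Bf n p m * (((i:ℝ)*((i:ℝ)+1)/S) * (2*((i:ℝ)+1)/S)) := by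
          field_simp
          ring
        have h7 : 0 ≤ Bf n p m * (((i:ℝ)*((i:ℝ)+1)/S) * (2*((i:ℝ)+1)/S)) :=
          mul_nonneg hBm0 hcS
        linarith
      have hre : (m + (i+1)) = m + i + 1 := by omega
      rw [hre]
      have hcast2 : ((i+1:ℕ):ℝ) = (i:ℝ)+1 := by push_cast; ring
      calc Bf n p m * (1 - ((i+1:ℕ):ℝ)*(((i+1:ℕ):ℝ)+1)/S)
          = Bf n p m * (1 - ((i:ℝ)+1)*((i:ℝ)+2)/S) := by rw [hcast2]; ring_nf
        _ ≤ Bf n p m * (1 - (i:ℝ)*((i:ℝ)+1)/S) * (1 - 2*((i:ℝ)+1)/S) := h6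
        _ ≤ Bf n p (m+i) * (1 - 2*((i:ℝ)+1)/S) := h5
        _ ≤ Bf n p (m+i+1) := hst
  -- plateau estimate
  have hplateau : ∀ i : ℕ, i ≤ J → (23/32) * Bf n p m ≤ Bf n p (m+i) := by
    intro i hi
    have h1 := hind i hi
    have hi0 : (0:ℝ) ≤ (i:ℝ) := Nat.cast_nonneg i
    have hiJ : (i:ℝ) ≤ σ/2 := le_trans (by exact_mod_cast Nat.cast_le.mpr hi) hJle
    have h2 : (i:ℝ)*((i:ℝ)+1)/S ≤ 9/32 := by
      rw [div_le_iff₀ hS0]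
      nlinarith
    have h3 : (23/32 : ℝ) ≤ 1 - (i:ℝ)*((i:ℝ)+1)/S := by linarith
    have h4 := mul_le_mul_of_nonneg_left h3 hBm0
    calc (23/32) * Bf n p m = Bf n p m * (23/32) := by ring
      _ ≤ Bf n p m * (1 - (i:ℝ)*((i:ℝ)+1)/S) := h4
      _ ≤ Bf n p (m+i) := h1
  -- sum the plateau
  have hsum1 : ∑ k ∈ range (n+1), Bf n p k = 1 := Bf_sum n p
  have hsubset : Finset.Ico m (m+J+1) ⊆ range (n+1) := by
    intro k hk
    rw [Finset.mem_Ico] at hk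
    rw [Finset.mem_range]
    omega
  have hsumIco : ∑ k ∈ Finset.Ico m (m+J+1), Bf n p k ≤ 1 := by
    rw [← hsum1]
    exact Finset.sum_le_sum_of_subset_of_nonneg hsubset
      (fun k _ _ => Bf_nonneg hp0.le hp1.le n k)
  have hre : ∑ k ∈ Finset.Ico m (m+J+1), Bf n p k = ∑ i ∈ range (J+1), Bf n p (m+i) := by
    rw [Finset.sum_Ico_eq_sum_range, show m+J+1-m = J+1 from by omega]
  have hlow : ((J:ℝ)+1) * ((23/32) * Bf n p m) ≤ ∑ i ∈ range (J+1), Bf n p (m+i) := by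
    have h := Finset.sum_le_sum (s := range (J+1))
      (f := fun _ : ℕ => (23/32) * Bf n p m) (g := fun i => Bf n p (m+i))
      (fun i hi => hplateau i (by rw [Finset.mem_range] at hi; omega))
    rw [Finset.sum_const, Finset.card_range, nsmul_eq_mul] at h
    push_cast at h
    linarith
  have hfin : ((J:ℝ)+1) * ((23/32) * Bf n p m) ≤ 1 := by
    rw [hre] at hsumIco
    linarith
  have hσpos : (0:ℝ) < σ := by linarith
  rw [le_div_iff₀ hσpos]
  have h8 : (σ/2) * ((23/32) * Bf n p m) ≤ ((J:ℝ)+1) * ((23/32) * Bf n p m) :=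
    mul_le_mul_of_nonneg_right hJgt.le (by positivity)
  have e9 : (σ/2) * ((23/32) * Bf n p m) = (23/64) * (Bf n p m * σ) := by ring
  nlinarith

section MatrixPart
variable {St : Type*} [Fintype St] [DecidableEq St]

lemma stoch_pow (Q : Matrix St St ℝ) (h0 : ∀ x y, 0 ≤ Q x y) (h1 : ∀ x, ∑ y, Q x y = 1) :
    ∀ k, (∀ x y, 0 ≤ (Q^k) x y) ∧ (∀ x, ∑ y, (Q^k) x y = 1) := by
  intro k
  induction k with
  | zero =>
    constructor
    · intro x y
      by_cases h : x = y <;> simp [Matrix.one_apply, h]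
    · intro x
      simp [Matrix.one_apply]
  | succ k ih =>
    have hmul : ∀ x y, (Q^(k+1)) x y = ∑ z, Q x z * (Q^k) z y := by
      intro x y
      rw [pow_succ', Matrix.mul_apply]
    constructor
    · intro x y
      rw [hmul]
      exact Finset.sum_nonneg fun z _ => mul_nonneg (h0 x z) (ih.1 z y)
    · intro x
      simp only [hmul]
      rw [Finset.sum_comm]
      calc ∑ z, ∑ y, Q x z * (Q^k) z y
          = ∑ z, Q x z * ∑ y, (Q^k) z y := by
            refine Finset.sum_congr rfl fun z _ => ?_
            rw [Finset.mul_sum]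
        _ = ∑ z, Q x z := by
            refine Finset.sum_congr rfl fun z _ => by rw [ih.2 z, mul_one]
        _ = 1 := h1 x

lemma pow_entry (Q : Matrix St St ℝ) (δ : ℝ) :
    ∀ (n : ℕ) (x y : St),
      ((δ • (1 : Matrix St St ℝ) + (1-δ) • Q)^n) x y
        = ∑ k ∈ range (n+1), Bf n (1-δ) k * ((Q^k) x y) := by
  intro n
  induction n with
  | zero =>
    intro x y
    simp [Bf]
  | succ n ih =>
    intro x y
    set p : ℝ := 1 - δ with hpdef
    set P : Matrix St St ℝ := δ • (1 : Matrix St St ℝ) + p • Q with hPdef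
    have hδp : 1 - p = δ := by rw [hpdef]; ring
    have hA : ∑ k ∈ range (n+2), Bf n p k * ((Q^k) x y)
        = ∑ k ∈ range (n+1), Bf n p k * ((Q^k) x y) := by
      rw [Finset.sum_range_succ, Bf_zero (Nat.lt_succ_self n), zero_mul, add_zero]
    have hB : ∑ z, Q x z * ((P^n) z y) = ∑ k ∈ range (n+1), Bf n p k * ((Q^(k+1)) x y) := by
      calc ∑ z, Q x z * ((P^n) z y)
          = ∑ z, Q x z * ∑ k ∈ range (n+1), Bf n p k * ((Q^k) z y) := by
            refine Finset.sum_congr rfl fun z _ => by rw [ih z y]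
        _ = ∑ z, ∑ k ∈ range (n+1), Bf n p k * (Q x z * ((Q^k) z y)) := by
            refine Finset.sum_congr rfl fun z _ => ?_
            rw [Finset.mul_sum]
            exact Finset.sum_congr rfl fun k _ => by ring
        _ = ∑ k ∈ range (n+1), ∑ z, Bf n p k * (Q x z * ((Q^k) z y)) := Finset.sum_comm
        _ = ∑ k ∈ range (n+1), Bf n p k * ((Q^(k+1)) x y) := by
            refine Finset.sum_congr rfl fun k _ => ?_
            rw [← Finset.mul_sum, pow_succ', Matrix.mul_apply]
    have hL : (P^(n+1)) x y
        = δ * ((P^n) x y) + p * ∑ z, Q x z * ((P^n) z y) := by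
      rw [pow_succ', Matrix.mul_apply]
      have h2 : ∀ z, P x z * ((P^n) z y)
          = (if x = z then δ * ((P^n) z y) else 0) + p * (Q x z * ((P^n) z y)) := by
        intro z
        rw [hPdef]
        simp only [Matrix.add_apply, Matrix.smul_apply, Matrix.one_apply, smul_eq_mul]
        by_cases h : x = z <;> simp [h] <;> ring
      rw [Finset.sum_congr rfl fun z _ => h2 z, Finset.sum_add_distrib,
        Finset.sum_ite_eq, if_pos (Finset.mem_univ x), ← Finset.mul_sum]
    rw [hL, ih x y, hB]
    calc δ * (∑ k ∈ range (n+1), Bf n p k * ((Q^k) x y))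
          + p * ∑ k ∈ range (n+1), Bf n p k * ((Q^(k+1)) x y)
        = δ * (∑ k ∈ range (n+2), Bf n p k * ((Q^k) x y))
          + p * ∑ k ∈ range (n+1), Bf n p k * ((Q^(k+1)) x y) := by rw [hA]
      _ = δ * ((∑ k ∈ range (n+1), Bf n p (k+1) * ((Q^(k+1)) x y)) + Bf n p 0 * ((Q^0) x y))
          + p * ∑ k ∈ range (n+1), Bf n p k * ((Q^(k+1)) x y) := by
          rw [Finset.sum_range_succ' (fun k => Bf n p k * ((Q^k) x y)) (n+1)]
      _ = (∑ k ∈ range (n+1), (δ * (Bf n p (k+1) * ((Q^(k+1)) x y))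
            + p * (Bf n p k * ((Q^(k+1)) x y)))) + δ * (Bf n p 0 * ((Q^0) x y)) := by
          rw [Finset.sum_add_distrib, ← Finset.mul_sum, ← Finset.mul_sum]; ring
      _ = (∑ k ∈ range (n+1), Bf (n+1) p (k+1) * ((Q^(k+1)) x y))
            + Bf (n+1) p 0 * ((Q^0) x y) := by
          rw [Bf_pascal0, hδp]
          congr 1
          · refine Finset.sum_congr rfl fun k _ => ?_
            rw [Bf_pascal, hδp]; ring
          · ring
      _ = ∑ k ∈ range (n+2), Bf (n+1) p k * ((Q^k) x y) := by
          rw [← Finset.sum_range_succ' (fun k => Bf (n+1) p k * ((Q^k) x y)) (n+1)]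

end MatrixPart

lemma sum_abs_Bf (n : ℕ) (p : ℝ) (hp0 : 0 < p) (hp1 : p < 1) :
    ∑ k ∈ range (n+2), |Bf n p k - Bf (n+1) p k|
      = 2 * p * Bf n p (Nat.floor (((n:ℝ)+1)*p)) := by
  set m := Nat.floor (((n:ℝ)+1)*p) with hm
  have hm_le : (m:ℝ) ≤ ((n:ℝ)+1)*p := Nat.floor_le (by positivity)
  have hm_lt : ((n:ℝ)+1)*p < (m:ℝ)+1 := Nat.lt_floor_add_one _
  have hmn : m ≤ n+1 := by
    have h2 : ((n:ℝ)+1)*p < (n:ℝ)+1 := mul_lt_of_lt_one_right (by positivity) hp1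
    have h4 : (m:ℝ) < ((n+1:ℕ):ℝ) := by push_cast; linarith
    have h5 : m < n+1 := by exact_mod_cast h4
    omega
  have h0 : ∀ k, k < m → Bf n p k ≤ Bf n p (k+1) := by
    intro k hk
    refine Bf_succ_ge hp0 hp1 ?_
    have h6 : (k:ℝ)+1 ≤ (m:ℝ) := by exact_mod_cast hk
    linarith
  have h1 : ∀ k, m ≤ k → Bf n p (k+1) ≤ Bf n p k := by
    intro k hk
    refine Bf_succ_le hp0 hp1 ?_
    have h6 : (m:ℝ) ≤ (k:ℝ) := by exact_mod_cast hk
    linarith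
  have htele := tele_sum (Bf n p) m (n+1) hmn h0 h1
  rw [Finset.sum_range_succ' (fun k => |Bf n p k - Bf (n+1) p k|) (n+1)]
  have e0 : |Bf n p 0 - Bf (n+1) p 0| = p * Bf n p 0 := by
    rw [Bf_pascal0, show Bf n p 0 - (1-p) * Bf n p 0 = p * Bf n p 0 from by ring,
      abs_of_nonneg (mul_nonneg hp0.le (Bf_nonneg hp0.le hp1.le n 0))]
  have e1 : ∀ k, |Bf n p (k+1) - Bf (n+1) p (k+1)| = p * |Bf n p (k+1) - Bf n p k| := by
    intro k
    rw [Bf_pascal, show Bf n p (k+1) - ((1-p) * Bf n p (k+1) + p * Bf n p k)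
        = p * (Bf n p (k+1) - Bf n p k) from by ring, abs_mul, abs_of_pos hp0]
  calc (∑ k ∈ range (n+1), |Bf n p (k+1) - Bf (n+1) p (k+1)|) + |Bf n p 0 - Bf (n+1) p 0|
      = (∑ k ∈ range (n+1), p * |Bf n p (k+1) - Bf n p k|) + p * Bf n p 0 := by
        rw [e0, Finset.sum_congr rfl fun k _ => e1 k]
    _ = p * (∑ k ∈ range (n+1), |Bf n p (k+1) - Bf n p k|) + p * Bf n p 0 := by
        rw [Finset.mul_sum]
    _ = p * ((Bf n p m - Bf n p 0) + (Bf n p m - Bf n p (n+1))) + p * Bf n p 0 := by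
        rw [htele]
    _ = 2 * p * Bf n p m := by
        rw [Bf_zero (Nat.lt_succ_self n)]; ring

theorem claim_consecutive_steps' {S : Type*} [Fintype S] [DecidableEq S]
    (P : Matrix S S ℝ) (δ : ℝ) (hδ0 : 0 < δ) (hδ1 : δ < 1)
    (hP0 : ∀ x y, 0 ≤ P x y) (hP1 : ∀ x, ∑ y, P x y = 1)
    (hdiag : ∀ x, δ ≤ P x x) (x : S) (t : ℕ) :
    (1 / 2) * ∑ y, |(P ^ t) x y - (P ^ (t + 1)) x y|
      ≤ Real.exp (-(9 * (t : ℝ) * δ * (1 - δ)) / 16)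
        + 12 * Real.sqrt 2 / Real.sqrt ((t : ℝ) * δ * (1 - δ)) := by
  set p : ℝ := 1 - δ with hpdef
  have hp0 : 0 < p := by rw [hpdef]; linarith
  have hp1 : p < 1 := by rw [hpdef]; linarith
  have hδp : (1:ℝ) - p = δ := by rw [hpdef]; ring
  have hpne : (1:ℝ) - δ ≠ 0 := by intro h; rw [hpdef] at hp0; linarith
  set Q : Matrix S S ℝ := ((1-δ)⁻¹) • (P - δ • (1 : Matrix S S ℝ)) with hQdef
  have hdecomp : P = δ • (1 : Matrix S S ℝ) + (1-δ) • Q := by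
    rw [hQdef, smul_smul, mul_inv_cancel₀ hpne, one_smul]
    abel
  have hQ0 : ∀ a b, 0 ≤ Q a b := by
    intro a b
    rw [hQdef]
    simp only [Matrix.smul_apply, Matrix.sub_apply, Matrix.one_apply, smul_eq_mul]
    have hinv : 0 ≤ ((1:ℝ)-δ)⁻¹ := by
      apply inv_nonneg.mpr; linarith
    by_cases h : a = b
    · apply mul_nonneg hinv
      subst h
      simp only [if_true]
      linarith [hdiag a]
    · simp only [if_neg h, mul_zero, sub_zero]
      exact mul_nonneg hinv (hP0 a b)
  have hQ1 : ∀ a, ∑ b, Q a b = 1 := by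
    intro a
    rw [hQdef]
    simp only [Matrix.smul_apply, Matrix.sub_apply, Matrix.one_apply, smul_eq_mul]
    rw [← Finset.mul_sum, Finset.sum_sub_distrib, hP1 a]
    simp only [mul_ite, mul_one, mul_zero]
    rw [Finset.sum_ite_eq, if_pos (Finset.mem_univ a)]
    field_simp
  have hQpow := stoch_pow Q hQ0 hQ1
  have hent : ∀ (n : ℕ) (a b : S), (P^n) a b = ∑ k ∈ range (n+1), Bf n p k * ((Q^k) a b) := by
    intro n a b
    have := pow_entry Q δ n a b
    rw [← hdecomp] at this
    rw [this, hpdef]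
  set m : ℕ := Nat.floor (((t:ℝ)+1)*p) with hmdef
  have hmt : m ≤ t := by
    have h2 : ((t:ℝ)+1)*p < (t:ℝ)+1 := mul_lt_of_lt_one_right (by positivity) hp1
    have h4 : (m:ℝ) < ((t+1:ℕ):ℝ) := by
      have := Nat.floor_le (show (0:ℝ) ≤ ((t:ℝ)+1)*p by positivity)
      push_cast
      rw [hmdef]
      push_cast at this ⊢
      linarith
    have h5 : m < t+1 := by exact_mod_cast h4
    omega
  -- the key TV bound
  have hkey : (1 / 2) * ∑ y, |(P ^ t) x y - (P ^ (t + 1)) x y| ≤ p * Bf t p m := by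
    have hdiff : ∀ y, (P ^ t) x y - (P ^ (t+1)) x y
        = ∑ k ∈ range (t+2), (Bf t p k - Bf (t+1) p k) * ((Q^k) x y) := by
      intro y
      rw [hent t x y, hent (t+1) x y]
      rw [show t+1+1 = t+2 from rfl]
      have hext : ∑ k ∈ range (t+1), Bf t p k * ((Q^k) x y)
          = ∑ k ∈ range (t+2), Bf t p k * ((Q^k) x y) := by
        rw [Finset.sum_range_succ (fun k => Bf t p k * ((Q^k) x y)) (t+1),
          Bf_zero (Nat.lt_succ_self t), zero_mul, add_zero]
      rw [hext, ← Finset.sum_sub_distrib]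
      exact Finset.sum_congr rfl fun k _ => by ring
    have habs : ∀ y, |(P ^ t) x y - (P ^ (t+1)) x y|
        ≤ ∑ k ∈ range (t+2), |Bf t p k - Bf (t+1) p k| * ((Q^k) x y) := by
      intro y
      rw [hdiff y]
      refine le_trans (Finset.abs_sum_le_sum_abs _ _) ?_
      refine Finset.sum_le_sum fun k _ => ?_
      rw [abs_mul, abs_of_nonneg ((hQpow k).1 x y)]
    have hsum : ∑ y, ∑ k ∈ range (t+2), |Bf t p k - Bf (t+1) p k| * ((Q^k) x y)
        = ∑ k ∈ range (t+2), |Bf t p k - Bf (t+1) p k| := by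
      rw [Finset.sum_comm]
      refine Finset.sum_congr rfl fun k _ => ?_
      rw [← Finset.mul_sum, (hQpow k).2 x, mul_one]
    have h7 : ∑ y, |(P ^ t) x y - (P ^ (t+1)) x y|
        ≤ ∑ k ∈ range (t+2), |Bf t p k - Bf (t+1) p k| := by
      rw [← hsum]
      exact Finset.sum_le_sum fun y _ => habs y
    have h8 := sum_abs_Bf t p hp0 hp1
    rw [← hmdef] at h8
    rw [h8] at h7
    calc (1/2) * ∑ y, |(P ^ t) x y - (P ^ (t+1)) x y|
        ≤ (1/2) * (2 * p * Bf t p m) :=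
          mul_le_mul_of_nonneg_left h7 (by norm_num)
      _ = p * Bf t p m := by ring
  have hBm0 : 0 ≤ Bf t p m := Bf_nonneg hp0.le hp1.le t m
  have hSe : (t:ℝ)*p*(1-p) = (t:ℝ)*δ*(1-δ) := by rw [hpdef]; ring
  have hsqrt2 : (1:ℝ) ≤ Real.sqrt 2 := by
    nlinarith [Real.sq_sqrt (show (0:ℝ) ≤ 2 by norm_num), Real.sqrt_nonneg 2]
  have hexp0 : (0:ℝ) ≤ Real.exp (-(9 * (t : ℝ) * δ * (1 - δ)) / 16) := (Real.exp_pos _).le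
  rcases le_or_gt ((t:ℝ)*δ*(1-δ)) 288 with hc | hc
  · -- small variance: trivial bound tv ≤ 1 ≤ RHS
    have hBm1 : Bf t p m ≤ 1 := by
      rw [← Bf_sum t p]
      refine Finset.single_le_sum (f := fun k => Bf t p k)
        (fun k _ => Bf_nonneg hp0.le hp1.le t k) ?_
      rw [Finset.mem_range]; omega
    have htv1 : (1 / 2) * ∑ y, |(P ^ t) x y - (P ^ (t + 1)) x y| ≤ 1 := by
      refine le_trans hkey ?_
      nlinarith [mul_le_one₀ hp1.le hBm0 hBm1]
    have hrhs : (1:ℝ) ≤ Real.exp (-(9 * (t : ℝ) * δ * (1 - δ)) / 16)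
        + 12 * Real.sqrt 2 / Real.sqrt ((t : ℝ) * δ * (1 - δ)) := by
      rcases Nat.eq_zero_or_pos t with ht0 | ht0
      · subst ht0
        simp only [Nat.cast_zero, zero_mul, mul_zero]
        rw [Real.sqrt_zero, div_zero]
        norm_num
      · have hSpos : (0:ℝ) < (t:ℝ)*δ*(1-δ) := by
          have h1t : (1:ℝ) ≤ (t:ℝ) := by exact_mod_cast ht0
          have ht' : (0:ℝ) < (t:ℝ) := by linarith
          exact mul_pos (mul_pos ht' hδ0) (by linarith)
        have hsq : Real.sqrt ((t:ℝ)*δ*(1-δ)) ≤ 12 * Real.sqrt 2 := by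
          have h144 : Real.sqrt 144 = 12 := by
            rw [show (144:ℝ) = 12^2 by norm_num, Real.sqrt_sq (by norm_num : (0:ℝ) ≤ 12)]
          have h288 : Real.sqrt 288 = 12 * Real.sqrt 2 := by
            rw [show (288:ℝ) = 144*2 by norm_num, Real.sqrt_mul (by norm_num) 2, h144]
          rw [← h288]
          exact Real.sqrt_le_sqrt hc
        have hsqpos : (0:ℝ) < Real.sqrt ((t:ℝ)*δ*(1-δ)) := Real.sqrt_pos.mpr hSpos
        have hge1 : (1:ℝ) ≤ 12 * Real.sqrt 2 / Real.sqrt ((t:ℝ)*δ*(1-δ)) := by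
          rw [le_div_iff₀ hsqpos, one_mul]
          exact hsq
        linarith
    linarith
  · -- large variance: use the mode bound
    have hmax := Bf_max_le t p hp0 hp1 (by rw [hSe]; exact hc)
    rw [← hmdef, hSe] at hmax
    have hsqpos : (0:ℝ) < Real.sqrt ((t:ℝ)*δ*(1-δ)) := Real.sqrt_pos.mpr (by linarith)
    have h9 : p * Bf t p m ≤ Bf t p m := by
      nlinarith [mul_nonneg (show (0:ℝ) ≤ 1-p by linarith) hBm0]
    have h11 : (3:ℝ) ≤ 12 * Real.sqrt 2 := by linarith
    have h10 : (3:ℝ) / Real.sqrt ((t:ℝ)*δ*(1-δ))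
        ≤ 12 * Real.sqrt 2 / Real.sqrt ((t:ℝ)*δ*(1-δ)) := by gcongr
    calc (1 / 2) * ∑ y, |(P ^ t) x y - (P ^ (t + 1)) x y|
        ≤ p * Bf t p m := hkey
      _ ≤ Bf t p m := h9
      _ ≤ 3 / Real.sqrt ((t:ℝ)*δ*(1-δ)) := hmax
      _ ≤ 12 * Real.sqrt 2 / Real.sqrt ((t:ℝ)*δ*(1-δ)) := h10
      _ ≤ Real.exp (-(9 * (t : ℝ) * δ * (1 - δ)) / 16)
          + 12 * Real.sqrt 2 / Real.sqrt ((t : ℝ) * δ * (1 - δ)) := by linarith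

end Helpers


/-- if every holding probability satisfies `P(x,x) ≥ δ` with
`0 < δ < 1`, then for every `x` and `t`,
`‖P^t(x,·) − P^{t+1}(x,·)‖ ≤ e^{−9tδ(1−δ)/16} + 12√2/√(tδ(1−δ))`. -/
theorem claim_consecutive_steps {S : Type*} [Fintype S] [DecidableEq S]
    (P : Matrix S S ℝ) (δ : ℝ) (hδ0 : 0 < δ) (hδ1 : δ < 1)
    (hP0 : ∀ x y, 0 ≤ P x y) (hP1 : ∀ x, ∑ y, P x y = 1)
    (hdiag : ∀ x, δ ≤ P x x) (x : S) (t : ℕ) :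
    tv (fun y => (P ^ t) x y) (fun y => (P ^ (t + 1)) x y)
      ≤ Real.exp (-(9 * (t : ℝ) * δ * (1 - δ)) / 16)
        + 12 * Real.sqrt 2 / Real.sqrt ((t : ℝ) * δ * (1 - δ)) := by
  have h := claim_consecutive_steps' P δ hδ0 hδ1 hP0 hP1 hdiag x t
  simpa [tv] using h
end
end

section
/- Hitting times on weighted trees: let T be a finite tree with positive edge conductances and let v be any vertex. Then for every subset A of vertices, max_x E_x[τ_A] ≤ t_v·(1 + 1/π(A)), where t_v = max_x E_x[τ_v] and π is the stationary distribution of the random walk. -/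
/-!
With `K = weight c` (so `π = K / K_tot`), `P = mean c` and `Δ = laplacian c = 1 - P`, the hitting
times satisfy `Δh = 1` off `A` and `Δg = 1` off `v`. The minimum principle for `Δ` on a connected
graph gives `h, g ≥ 0` and `h ≤ g + h(v)`. Reversibility makes `Δ` self-adjoint for the
`K`-weighted pairing and forces `∑ K Δf = 0`, so `K Δg = K - K_tot 𝟙_v`; pairing with `h` gives
`K_tot h(v) = ∑_{x ∉ A} K (h - g) + ∑_{x ∈ A} K g P h`.
The first sum is at most `K(Aᶜ) h(v)` and the second at most `t_v K(Aᶜ)`, since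
`∑_{x ∈ A} K P h = K(Aᶜ)`. Hence `π(A) h(v) ≤ t_v (1 - π(A))` and `h ≤ t_v + h(v) ≤ t_v / π(A)`.
-/

open Finset

namespace Conductances

variable {S : Type*} [Fintype S]

noncomputable section

def weight (c : S → S → ℝ) (x : S) : ℝ := ∑ z, c x z

def mean (c : S → S → ℝ) (f : S → ℝ) (x : S) : ℝ := ∑ y, c x y / weight c x * f y

def laplacian (c : S → S → ℝ) (f : S → ℝ) (x : S) : ℝ := f x - mean c f x

end

variable {c : S → S → ℝ}

lemma weight_nonneg (hc0 : ∀ x y, 0 ≤ c x y) (x : S) : 0 ≤ weight c x :=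
  sum_nonneg fun y _ => hc0 x y

lemma mean_nonneg (hc0 : ∀ x y, 0 ≤ c x y) {f : S → ℝ} (hf : ∀ x, 0 ≤ f x) (x : S) :
    0 ≤ mean c f x :=
  sum_nonneg fun y _ => mul_nonneg (div_nonneg (hc0 x y) (weight_nonneg hc0 x)) (hf y)

lemma weight_mul_mean (hc0 : ∀ x y, 0 ≤ c x y) (f : S → ℝ) (x : S) :
    weight c x * mean c f x = ∑ y, c x y * f y := by
  rcases (weight_nonneg hc0 x).eq_or_lt with h0 | hpos
  · -- an isolated vertex: both sides vanish although the division by `weight c x` is junk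
    have hc : ∀ y, c x y = 0 := fun y =>
      (sum_eq_zero_iff_of_nonneg fun y _ => hc0 x y).1 h0.symm y (mem_univ y)
    simp [hc, ← h0]
  · rw [mean, mul_sum]
    refine sum_congr rfl fun y _ => ?_
    field_simp

lemma weight_mul_laplacian (hc0 : ∀ x y, 0 ≤ c x y) (f : S → ℝ) (x : S) :
    weight c x * laplacian c f x = ∑ y, c x y * (f x - f y) := by
  rw [laplacian, mul_sub, weight_mul_mean hc0, weight, sum_mul]
  simp only [mul_sub, sum_sub_distrib]

lemma laplacian_eq_one_iff {f : S → ℝ} {x : S} :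
    laplacian c f x = 1 ↔ f x = 1 + mean c f x := by
  rw [laplacian, sub_eq_iff_eq_add, add_comm]

lemma laplacian_sub (f₁ f₂ : S → ℝ) (x : S) :
    laplacian c (f₁ - f₂) x = laplacian c f₁ x - laplacian c f₂ x := by
  simp only [laplacian, mean, Pi.sub_apply, mul_sub, sum_sub_distrib]
  ring

lemma sum_weight_mul_mul_laplacian_comm (hsym : ∀ x y, c x y = c y x)
    (hc0 : ∀ x y, 0 ≤ c x y) (f g : S → ℝ) :
    ∑ x, weight c x * f x * laplacian c g x = ∑ x, weight c x * g x * laplacian c f x := by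
  have key : ∀ f g : S → ℝ, ∑ x, weight c x * f x * laplacian c g x
      = ∑ x, ∑ y, c x y * f x * g x - ∑ x, ∑ y, c x y * f x * g y := by
    intro f g
    simp only [← sum_sub_distrib, mul_comm (weight c _) (f _), mul_assoc,
      weight_mul_laplacian hc0, mul_sum]
    exact sum_congr rfl fun x _ => sum_congr rfl fun y _ => by ring
  rw [key, key, sum_comm (f := fun x y => c x y * g x * f y)]
  congr 1
  · exact sum_congr rfl fun x _ => sum_congr rfl fun y _ => by ring
  · exact sum_congr rfl fun x _ => sum_congr rfl fun y _ => by rw [hsym]; ring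

lemma sum_weight_mul_laplacian (hsym : ∀ x y, c x y = c y x) (hc0 : ∀ x y, 0 ≤ c x y)
    (f : S → ℝ) : ∑ x, weight c x * laplacian c f x = 0 := by
  have h := sum_weight_mul_mul_laplacian_comm hsym hc0 (fun _ => 1) f
  simp only [mul_one] at h
  rw [h]
  refine sum_eq_zero fun x _ => ?_
  rw [mul_right_comm, weight_mul_laplacian hc0]
  simp

lemma weight_mul_laplacian_of_hitting_vertex [DecidableEq S] (hsym : ∀ x y, c x y = c y x)
    (hc0 : ∀ x y, 0 ≤ c x y) {v : S} {g : S → ℝ} (hg : ∀ x ≠ v, laplacian c g x = 1)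
    (x : S) :
    weight c x * laplacian c g x = weight c x - if x = v then ∑ w, weight c w else 0 := by
  split_ifs with hxv
  · subst hxv
    have h0 := sum_weight_mul_laplacian hsym hc0 g
    have hsplit := add_sum_erase univ (fun y => weight c y * laplacian c g y) (mem_univ x)
    have hrest : ∑ y ∈ univ.erase x, weight c y * laplacian c g y
        = ∑ y ∈ univ.erase x, weight c y :=
      sum_congr rfl fun y hy => by rw [hg y (ne_of_mem_erase hy), mul_one]
    linarith [add_sum_erase univ (weight c) (mem_univ x)]
  · rw [hg x hxv, mul_one, sub_zero]

lemma sum_weight_mul_mul_laplacian_of_hitting_vertex [DecidableEq S]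
    (hsym : ∀ x y, c x y = c y x) (hc0 : ∀ x y, 0 ≤ c x y) {v : S} {g : S → ℝ}
    (hg : ∀ x ≠ v, laplacian c g x = 1) (f : S → ℝ) :
    ∑ x, weight c x * f x * laplacian c g x
      = ∑ x, weight c x * f x - (∑ w, weight c w) * f v := by
  simp only [mul_right_comm _ (f _), weight_mul_laplacian_of_hitting_vertex hsym hc0 hg,
    sub_mul, ite_mul, zero_mul, sum_sub_distrib, sum_ite_eq', mem_univ, if_true]

lemma sum_weight_mul_mul_laplacian_of_hitting_set [DecidableEq S] {A : Finset S}
    {h : S → ℝ} (hhA : ∀ x ∈ A, h x = 0) (hh : ∀ x ∉ A, laplacian c h x = 1) (f : S → ℝ) :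
    ∑ x, weight c x * f x * laplacian c h x
      = ∑ x ∈ Aᶜ, weight c x * f x - ∑ x ∈ A, weight c x * f x * mean c h x := by
  rw [← sum_add_sum_compl A, add_comm, sub_eq_add_neg, ← sum_neg_distrib]
  congr 1 <;> refine sum_congr rfl fun x hx => ?_
  · rw [hh x (mem_compl.1 hx), mul_one]
  · rw [laplacian, hhA x hx]
    ring

lemma sum_weight_mul_mean_of_hitting_set [DecidableEq S] (hsym : ∀ x y, c x y = c y x)
    (hc0 : ∀ x y, 0 ≤ c x y) {A : Finset S} {h : S → ℝ} (hhA : ∀ x ∈ A, h x = 0)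
    (hh : ∀ x ∉ A, laplacian c h x = 1) :
    ∑ x ∈ A, weight c x * mean c h x = ∑ x ∈ Aᶜ, weight c x := by
  have h0 := sum_weight_mul_laplacian hsym hc0 h
  have h1 := sum_weight_mul_mul_laplacian_of_hitting_set hhA hh (fun _ => 1)
  simp only [mul_one] at h1
  linarith

lemma weight_total_mul_hitting_eq [DecidableEq S] (hsym : ∀ x y, c x y = c y x)
    (hc0 : ∀ x y, 0 ≤ c x y) {A : Finset S} {v : S} {h g : S → ℝ}
    (hhA : ∀ x ∈ A, h x = 0) (hh : ∀ x ∉ A, laplacian c h x = 1)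
    (hg : ∀ x ≠ v, laplacian c g x = 1) :
    (∑ w, weight c w) * h v
      = ∑ x ∈ Aᶜ, weight c x * (h x - g x) + ∑ x ∈ A, weight c x * g x * mean c h x := by
  have green := sum_weight_mul_mul_laplacian_comm hsym hc0 h g
  rw [sum_weight_mul_mul_laplacian_of_hitting_vertex hsym hc0 hg,
    sum_weight_mul_mul_laplacian_of_hitting_set hhA hh] at green
  have hsupp : ∑ x, weight c x * h x = ∑ x ∈ Aᶜ, weight c x * h x := by
    rw [← sum_add_sum_compl A, sum_eq_zero fun x hx => by rw [hhA x hx, mul_zero], zero_add]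
  simp only [mul_sub, sum_sub_distrib]
  linarith

lemma weight_mul_hitting_le [DecidableEq S] (hsym : ∀ x y, c x y = c y x)
    (hc0 : ∀ x y, 0 ≤ c x y) {A : Finset S} {v : S} {h g : S → ℝ} {t : ℝ}
    (hhA : ∀ x ∈ A, h x = 0) (hh : ∀ x ∉ A, laplacian c h x = 1)
    (hg : ∀ x ≠ v, laplacian c g x = 1) (hh0 : ∀ x, 0 ≤ h x)
    (hcomp : ∀ x, h x ≤ g x + h v) (hgt : ∀ x, g x ≤ t) :
    (∑ x ∈ A, weight c x) * h v ≤ t * ∑ x ∈ Aᶜ, weight c x := by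
  have hid := weight_total_mul_hitting_eq hsym hc0 hhA hh hg
  have off : ∑ x ∈ Aᶜ, weight c x * (h x - g x) ≤ (∑ x ∈ Aᶜ, weight c x) * h v := by
    rw [sum_mul]
    exact sum_le_sum fun x _ =>
      mul_le_mul_of_nonneg_left (by linarith [hcomp x]) (weight_nonneg hc0 x)
  have on : ∑ x ∈ A, weight c x * g x * mean c h x ≤ t * ∑ x ∈ Aᶜ, weight c x := by
    rw [← sum_weight_mul_mean_of_hitting_set hsym hc0 hhA hh, mul_sum]
    refine sum_le_sum fun x _ => ?_
    rw [mul_right_comm, mul_comm t]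
    exact mul_le_mul_of_nonneg_left (hgt x)
      (mul_nonneg (weight_nonneg hc0 x) (mean_nonneg hc0 hh0 x))
  rw [← sum_add_sum_compl A, add_mul] at hid
  linarith

lemma hitting_le_mul_one_add_div [DecidableEq S] (hsym : ∀ x y, c x y = c y x)
    (hc0 : ∀ x y, 0 ≤ c x y) {A : Finset S} {v : S} {h g : S → ℝ} {t : ℝ}
    (hhA : ∀ x ∈ A, h x = 0) (hh : ∀ x ∉ A, laplacian c h x = 1)
    (hg : ∀ x ≠ v, laplacian c g x = 1) (hh0 : ∀ x, 0 ≤ h x)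
    (hcomp : ∀ x, h x ≤ g x + h v) (hgt : ∀ x, g x ≤ t) (ht : 0 ≤ t)
    (hA : 0 < ∑ x ∈ A, weight c x) (x : S) :
    h x ≤ t * (1 + (∑ w, weight c w) / ∑ x ∈ A, weight c x) := by
  have hv : h v ≤ t * ((∑ x ∈ Aᶜ, weight c x) / ∑ x ∈ A, weight c x) := by
    rw [mul_div_assoc', le_div_iff₀ hA]
    linarith [weight_mul_hitting_le hsym hc0 hhA hh hg hh0 hcomp hgt]
  calc h x ≤ t + h v := by linarith [hcomp x, hgt x]
    _ ≤ t * (1 + (∑ x ∈ Aᶜ, weight c x) / ∑ x ∈ A, weight c x) := by linarith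
    _ ≤ t * (1 + (∑ w, weight c w) / ∑ x ∈ A, weight c x) := by
      gcongr
      · exact fun z _ _ => weight_nonneg hc0 z
      · exact subset_univ _

variable {G : SimpleGraph S}

lemma weight_pos_of_adj (hc0 : ∀ x y, 0 ≤ c x y) (hpos : ∀ x y, G.Adj x y → 0 < c x y)
    {x y : S} (hxy : G.Adj x y) : 0 < weight c x :=
  (hpos x y hxy).trans_le (single_le_sum (fun z _ => hc0 x z) (mem_univ y))

lemma eq_of_isMin_of_laplacian_nonneg (hc0 : ∀ x y, 0 ≤ c x y) {u : S → ℝ} {x y : S}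
    (hmin : ∀ z, u x ≤ u z) (hx : 0 ≤ laplacian c u x) (hxy : 0 < c x y) : u y = u x := by
  have hterm : ∀ z ∈ univ, c x z * (u x - u z) ≤ 0 := fun z _ =>
    mul_nonpos_of_nonneg_of_nonpos (hc0 x z) (by linarith [hmin z])
  have hsum : ∑ z, c x z * (u x - u z) = 0 :=
    le_antisymm (sum_nonpos hterm)
      (weight_mul_laplacian hc0 u x ▸ mul_nonneg (weight_nonneg hc0 x) hx)
  have := (sum_eq_zero_iff_of_nonpos hterm).1 hsum y (mem_univ y)
  rcases mul_eq_zero.1 this with h | h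
  · exact absurd h hxy.ne'
  · linarith

lemma le_of_laplacian_nonneg (hconn : G.Connected) (hc0 : ∀ x y, 0 ≤ c x y)
    (hpos : ∀ x y, G.Adj x y → 0 < c x y) {B : Finset S} (hB : B.Nonempty) {u : S → ℝ}
    {m : ℝ} (huB : ∀ x ∈ B, m ≤ u x) (hu : ∀ x ∉ B, 0 ≤ laplacian c u x) (x : S) :
    m ≤ u x := by
  obtain ⟨b, hb⟩ := hB
  obtain ⟨x₀, -, hx₀⟩ := exists_min_image univ u ⟨b, mem_univ b⟩
  have hmin : ∀ z, u x₀ ≤ u z := fun z => hx₀ z (mem_univ z)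
  by_contra! hlt
  have hprop : ∀ {y z : S}, G.Walk y z → u y = u x₀ → u z = u x₀ := by
    intro y z p
    induction p with
    | nil => exact id
    | @cons y w z hyw _ ih =>
      intro hy
      have hyB : y ∉ B := fun hyB => by linarith [huB y hyB, hmin x]
      exact ih ((eq_of_isMin_of_laplacian_nonneg hc0 (fun z => hy ▸ hmin z) (hu y hyB)
        (hpos y w hyw)).trans hy)
  obtain ⟨p⟩ := hconn.preconnected x₀ b
  linarith [huB b hb, hprop p rfl, hmin x]

lemma hitting_nonneg (hconn : G.Connected) (hc0 : ∀ x y, 0 ≤ c x y)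
    (hpos : ∀ x y, G.Adj x y → 0 < c x y) {A : Finset S} (hA : A.Nonempty) {h : S → ℝ}
    (hhA : ∀ x ∈ A, h x = 0) (hh : ∀ x ∉ A, laplacian c h x = 1) (x : S) : 0 ≤ h x :=
  le_of_laplacian_nonneg hconn hc0 hpos hA (fun x hx => (hhA x hx).ge)
    (fun x hx => (hh x hx).ge.trans' zero_le_one) x

lemma hitting_le_add [DecidableEq S] (hconn : G.Connected) (hc0 : ∀ x y, 0 ≤ c x y)
    (hpos : ∀ x y, G.Adj x y → 0 < c x y) {A : Finset S} {v : S} {h g : S → ℝ}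
    (hhA : ∀ x ∈ A, h x = 0) (hh : ∀ x ∉ A, laplacian c h x = 1) (hh0 : ∀ x, 0 ≤ h x)
    (hgv : g v = 0) (hg : ∀ x ≠ v, laplacian c g x = 1) (hg0 : ∀ x, 0 ≤ g x) (x : S) :
    h x ≤ g x + h v := by
  have hbdry : ∀ y ∈ insert v A, -h v ≤ (g - h) y := by
    simp only [mem_insert, forall_eq_or_imp, Pi.sub_apply, hgv, zero_sub, le_refl, true_and]
    intro y hy
    linarith [hhA y hy, hg0 y, hh0 v]
  have hharm : ∀ y ∉ insert v A, 0 ≤ laplacian c (g - h) y := fun y hy => by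
    rw [mem_insert, not_or] at hy
    rw [laplacian_sub, hg y hy.1, hh y hy.2, sub_self]
  have := le_of_laplacian_nonneg hconn hc0 hpos (insert_nonempty v A) hbdry hharm x
  rw [Pi.sub_apply] at this
  linarith

end Conductances

open Conductances in
theorem claim_tree_hit_general {S : Type*} [Fintype S] [DecidableEq S]
    (G : SimpleGraph S) (hG : G.IsTree)
    (c : S → S → ℝ) (hsym : ∀ x y, c x y = c y x) (hc0 : ∀ x y, 0 ≤ c x y)
    (hadj : ∀ x y, G.Adj x y ↔ c x y ≠ 0)
    (v : S) (A : Finset S) (hA : A.Nonempty)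
    (h g : S → ℝ)
    (hhA : ∀ x ∈ A, h x = 0)
    (hhrec : ∀ x ∉ A, h x = 1 + ∑ y, (c x y / ∑ z, c x z) * h y)
    (hgv : g v = 0)
    (hgrec : ∀ x, x ≠ v → g x = 1 + ∑ y, (c x y / ∑ z, c x z) * g y) :
    ∀ x, h x ≤ (⨆ z, g z) *
      (1 + 1 / ∑ x ∈ A, (∑ z, c x z) / (∑ w, ∑ z, c w z)) := by
  intro x
  obtain ⟨a, ha⟩ := hA
  rcases subsingleton_or_nontrivial S with hS | hS
  · have hg0 : ∀ z, g z = 0 := fun z => Subsingleton.elim z v ▸ hgv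
    simp [Subsingleton.elim x a, hhA a ha, hg0]
  have hconn := hG.connected
  have hpos : ∀ x y, G.Adj x y → 0 < c x y := fun x y hxy =>
    (hc0 x y).lt_of_ne' ((hadj x y).1 hxy)
  have hh : ∀ x ∉ A, laplacian c h x = 1 := fun x hx => laplacian_eq_one_iff.2 (hhrec x hx)
  have hg : ∀ x ≠ v, laplacian c g x = 1 := fun x hx => laplacian_eq_one_iff.2 (hgrec x hx)
  have hh0 := hitting_nonneg hconn hc0 hpos ⟨a, ha⟩ hhA hh
  have hg0 : ∀ x, 0 ≤ g x := hitting_nonneg hconn hc0 hpos (singleton_nonempty v)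
    (by simpa using hgv) (fun x hx => hg x (notMem_singleton.1 hx))
  have hgt : ∀ x, g x ≤ ⨆ z, g z := le_ciSup (Set.finite_range g).bddAbove
  obtain ⟨y, hay⟩ := hconn.preconnected.exists_adj_of_nontrivial a
  have hKA : 0 < ∑ x ∈ A, weight c x :=
    (weight_pos_of_adj hc0 hpos hay).trans_le
      (single_le_sum (fun z _ => weight_nonneg hc0 z) ha)
  rw [← sum_div, one_div_div]
  exact hitting_le_mul_one_add_div hsym hc0 hhA hh hg hh0
    (hitting_le_add hconn hc0 hpos hhA hh hh0 hgv hg hg0) hgt ((hg0 v).trans (hgt v)) hKA x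

/-- hitting times on weighted trees.  For the random walk on a finite
tree with positive edge conductances `c` (moving to a neighbour with probability
proportional to the conductance, stationary measure proportional to the total
conductance at a vertex), for every vertex `v` and every subset `A` of vertices,
`max_x E_x[τ_A] ≤ t_v (1 + 1/π(A))`, where `t_v = max_x E_x[τ_v]`.  Expected hitting
times are characterized by the usual hitting-time equations. -/
theorem claim_tree_hit {S : Type*} [Fintype S] [DecidableEq S] [Nonempty S]
    (G : SimpleGraph S) (hG : G.IsTree)
    (c : S → S → ℝ) (hsym : ∀ x y, c x y = c y x) (hc0 : ∀ x y, 0 ≤ c x y)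
    (hadj : ∀ x y, G.Adj x y ↔ c x y ≠ 0)
    (v : S) (A : Finset S) (hA : A.Nonempty)
    (h g : S → ℝ)
    (hhA : ∀ x ∈ A, h x = 0)
    (hhrec : ∀ x ∉ A, h x = 1 + ∑ y, (c x y / ∑ z, c x z) * h y)
    (hgv : g v = 0)
    (hgrec : ∀ x, x ≠ v → g x = 1 + ∑ y, (c x y / ∑ z, c x z) * g y) :
    ∀ x, h x ≤ (⨆ z, g z) *
      (1 + 1 / ∑ x ∈ A, (∑ z, c x z) / (∑ w, ∑ z, c w z)) :=
  claim_tree_hit_general G hG c hsym hc0 hadj v A hA h g hhA hhrec hgv hgrec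
end

section
/- Expected hitting time on a weighted tree: let T be a finite tree with edge conductances c(u,v), let x, y be vertices and v_0 = x, v_1, …, v_n = y the unique path joining them. Writing T_x(z) for the union of {z} with the component of T − {z} containing x, and C_i = ∑_{w,z ∈ T_x(v_{i+1})} c(w,z), one has E_x[τ_y] = ∑_{i=0}^{n−1} ( C_i / c(v_i, v_{i+1}) − 1 ). -/
open scoped BigOperators Classical

/-!
Let `a = v_i`, `b = v_{i+1}` and let `A` be the component of `x` in `T - b`. In a tree, `(a, b)` is
the only edge leaving `A`, and `y ∉ A`. Multiplying the hitting-time equation at each `z ∈ A` by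
the total conductance at `z` and summing over `A`, the flow terms inside `A` cancel by symmetry
and only the edge `(a, b)` survives:
`c(a,b) (h a - h b) = ∑_{z ∈ A, w} c(z,w) = C_i - c(a,b)`.
Summing `h v_i - h v_{i+1}` along the path telescopes to `h x - h y = h x`.
-/

open Finset

namespace SimpleGraph

variable {V : Type*} {G : SimpleGraph V}

lemma Walk.IsPath.exists_walk_getVert_notMem_support {x y : V} {p : G.Walk x y}
    (hp : p.IsPath) {i : ℕ} (hi : i < p.length) :
    ∃ q : G.Walk x (p.getVert i), p.getVert (i + 1) ∉ q.support := by
  refine ⟨p.take i, fun hmem => ?_⟩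
  obtain ⟨j, hj, hjle⟩ := (p.take i).mem_support_iff_exists_getVert.mp hmem
  rw [Walk.take_getVert] at hj
  have := hp.getVert_injOn (by simp; omega) (by simp; omega) hj
  omega

lemma Walk.exists_notMem_support_of_adj {x z w b : V} (q : G.Walk x z) (hq : b ∉ q.support)
    (hzw : G.Adj z w) (hwb : w ≠ b) : ∃ q' : G.Walk x w, b ∉ q'.support :=
  ⟨q.concat hzw, by simp [Walk.support_concat, hq, hwb.symm]⟩

lemma IsAcyclic.eq_of_adj_of_notMem_support (hG : G.IsAcyclic) {x b z₁ z₂ : V}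
    (h₁ : G.Adj z₁ b) (h₂ : G.Adj z₂ b) (q₁ : G.Walk x z₁) (hq₁ : b ∉ q₁.support)
    (q₂ : G.Walk x z₂) (hq₂ : b ∉ q₂.support) : z₁ = z₂ := by
  have hb₁ : b ∉ q₁.bypass.support := fun h => hq₁ (q₁.support_bypass_subset_support h)
  have hb₂ : b ∉ q₂.bypass.support := fun h => hq₂ (q₂.support_bypass_subset_support h)
  have hp₂ : (q₂.bypass.concat h₂).IsPath := q₂.bypass_isPath.concat hb₂ h₂
  have hz₁ :=
    hG.mem_support_of_ne_mem_support_of_adj_of_isPath hp₂ q₁.bypass_isPath h₁.symm hb₁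
  simpa using hG.eq_penultimate_of_adj_end hp₂ h₁.symm hz₁

lemma IsAcyclic.eq_and_eq_of_adj_of_notMem_support (hG : G.IsAcyclic) {x a b z w : V}
    (hab : G.Adj a b) (ha : ∃ q : G.Walk x a, b ∉ q.support)
    (hz : ∃ q : G.Walk x z, b ∉ q.support) (hw : ¬∃ q : G.Walk x w, b ∉ q.support)
    (hzw : G.Adj z w) : z = a ∧ w = b := by
  obtain ⟨q, hq⟩ := hz
  have hwb : w = b := by
    by_contra hwb
    exact hw (q.exists_notMem_support_of_adj hq hzw hwb)
  subst hwb
  obtain ⟨qa, hqa⟩ := ha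
  exact ⟨hG.eq_of_adj_of_notMem_support hzw hab q hq qa hqa, rfl⟩

lemma IsAcyclic.support_subset_support_of_isPath (hG : G.IsAcyclic) {x y : V}
    {p : G.Walk x y} (hp : p.IsPath) (q : G.Walk x y) : p.support ⊆ q.support := by
  have hpq : p = q.bypass := congrArg Subtype.val <|
    (hG.subsingleton_path x y).elim ⟨p, hp⟩ ⟨q.bypass, q.bypass_isPath⟩
  exact hpq ▸ q.support_bypass_subset_support

end SimpleGraph

lemma Finset.sum_sum_ite_and {α M : Type*} [Fintype α] [AddCommMonoid M] (P : α → Prop)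
    [DecidablePred P] (f : α → α → M) :
    ∑ w, ∑ z, (if P w ∧ P z then f w z else 0)
      = ∑ w ∈ univ.filter P, ∑ z ∈ univ.filter P, f w z := by
  simp only [sum_filter, ite_and]
  refine sum_congr rfl fun w _ => ?_
  split_ifs <;> simp

section Network

variable {S : Type*} (c : S → S → ℝ)

lemma sum_sum_mul_sub_eq_zero_of_symm (hsym : ∀ z w, c z w = c w z) (A : Finset S)
    (h : S → ℝ) : ∑ z ∈ A, ∑ w ∈ A, c z w * (h z - h w) = 0 := by
  have hswap : ∑ z ∈ A, ∑ w ∈ A, c z w * (h z - h w)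
      = ∑ z ∈ A, ∑ w ∈ A, c w z * (h w - h z) := sum_comm
  have hsum : ∑ z ∈ A, ∑ w ∈ A, (c z w * (h z - h w) + c w z * (h w - h z)) = 0 :=
    sum_eq_zero fun z _ => sum_eq_zero fun w _ => by rw [hsym w z]; ring
  simp only [sum_add_distrib, ← hswap] at hsum
  linarith

lemma sum_mul_sub_eq_sum_of_eq_one_add [Fintype S] {z : S} (hz : ∑ u, c z u ≠ 0)
    {h : S → ℝ} (hrec : h z = 1 + ∑ w, (c z w / ∑ u, c z u) * h w) :
    ∑ w, c z w * (h z - h w) = ∑ w, c z w := by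
  have hscaled : (∑ u, c z u) * h z = ∑ u, c z u + ∑ w, c z w * h w := by
    rw [hrec, mul_add, mul_one, mul_sum]
    congr 1
    exact sum_congr rfl fun w _ => by field_simp
  simp only [mul_sub, sum_sub_distrib, ← sum_mul]
  linarith

variable {c} {A : Finset S} {a b : S}

lemma sum_sum_eq_add_of_cut [Fintype S] [DecidableEq S] (ha : a ∈ A) (hb : b ∉ A)
    (hcut : ∀ z ∈ A, ∀ w ∉ A, (z, w) ≠ (a, b) → c z w = 0) (f : S → S → ℝ) :
    ∑ z ∈ A, ∑ w, c z w * f z w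
      = ∑ z ∈ A, ∑ w ∈ A, c z w * f z w + c a b * f a b := by
  have hout : ∑ z ∈ A, ∑ w ∈ Aᶜ, c z w * f z w = c a b * f a b := by
    rw [← sum_product' (f := fun z w => c z w * f z w)]
    refine sum_eq_single_of_mem (a, b) (mem_product.mpr ⟨ha, mem_compl.mpr hb⟩) ?_
    rintro ⟨z, w⟩ hzw hne
    obtain ⟨hz, hw⟩ := mem_product.mp hzw
    rw [hcut z hz w (mem_compl.mp hw) hne, zero_mul]
  rw [← hout, ← sum_add_distrib]
  exact sum_congr rfl fun z _ => (sum_add_sum_compl A _).symm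

lemma sum_eq_of_cut (ha : a ∈ A) (hb : b ∉ A)
    (hcut : ∀ z ∈ A, ∀ w ∉ A, (z, w) ≠ (a, b) → c z w = 0) :
    ∑ z ∈ A, c z b = c a b :=
  sum_eq_single_of_mem a ha fun z hz hza => hcut z hz b hb (by simp [hza])

theorem mul_sub_add_eq_sum_sum_insert_of_cut [Fintype S] [DecidableEq S]
    (hsym : ∀ z w, c z w = c w z) (hbb : c b b = 0) (ha : a ∈ A) (hb : b ∉ A)
    (hcut : ∀ z ∈ A, ∀ w ∉ A, (z, w) ≠ (a, b) → c z w = 0)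
    {h : S → ℝ} (heq : ∀ z ∈ A, ∑ w, c z w * (h z - h w) = ∑ w, c z w) :
    c a b * (h a - h b) + c a b = ∑ w ∈ insert b A, ∑ z ∈ insert b A, c w z := by
  have hflow := sum_sum_eq_add_of_cut ha hb hcut fun z w => h z - h w
  have hmass := sum_sum_eq_add_of_cut ha hb hcut fun _ _ => (1 : ℝ)
  rw [sum_sum_mul_sub_eq_zero_of_symm c hsym, zero_add, sum_congr rfl heq] at hflow
  simp only [mul_one] at hmass
  have hin : ∑ z ∈ A, c b z = c a b := by
    rw [← sum_eq_of_cut ha hb hcut]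
    exact sum_congr rfl fun z _ => hsym b z
  rw [sum_insert hb, sum_insert hb, hbb, hin, sum_congr rfl fun w _ => sum_insert hb,
    sum_add_distrib, sum_eq_of_cut ha hb hcut]
  linarith

end Network

theorem SimpleGraph.IsTree.sub_eq_of_hitting_eq {S : Type*} [Fintype S] [DecidableEq S]
    {G : SimpleGraph S} (hG : G.IsTree) {c : S → S → ℝ} (hsym : ∀ x y, c x y = c y x)
    (hc0 : ∀ x y, 0 ≤ c x y) (hadj : ∀ x y, G.Adj x y ↔ c x y ≠ 0) {x y a b : S}
    (hab : G.Adj a b) (ha : ∃ q : G.Walk x a, b ∉ q.support)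
    (hy : ∀ q : G.Walk x y, b ∈ q.support) {h : S → ℝ}
    (hrec : ∀ z, z ≠ y → h z = 1 + ∑ w, (c z w / ∑ u, c z u) * h w) :
    h a - h b = (∑ w, ∑ z,
        if ((w = b ∨ ∃ q : G.Walk x w, b ∉ q.support)
          ∧ (z = b ∨ ∃ q : G.Walk x z, b ∉ q.support))
        then c w z else 0) / c a b - 1 := by
  set A := univ.filter fun w => ∃ q : G.Walk x w, b ∉ q.support
  have hmem (w : S) : w ∈ A ↔ ∃ q : G.Walk x w, b ∉ q.support := by simp [A]
  have hbA : b ∉ A := fun hb => by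
    obtain ⟨q, hq⟩ := (hmem b).mp hb
    exact hq q.end_mem_support
  have hyA : y ∉ A := fun hy' => by
    obtain ⟨q, hq⟩ := (hmem y).mp hy'
    exact hq (hy q)
  have hcut : ∀ z ∈ A, ∀ w ∉ A, (z, w) ≠ (a, b) → c z w = 0 := by
    intro z hz w hw hne
    by_contra hc
    refine hne (Prod.ext_iff.mpr ?_)
    exact hG.isAcyclic.eq_and_eq_of_adj_of_notMem_support hab ha ((hmem z).mp hz)
      (fun hw' => hw ((hmem w).mpr hw')) ((hadj z w).mpr hc)
  have hdeg : ∀ z ∈ A, ∑ u, c z u ≠ 0 := by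
    intro z hz
    obtain ⟨q⟩ := hG.connected.preconnected z b
    have hzu := q.adj_snd (q.not_nil_of_ne fun hzb => hbA (hzb ▸ hz))
    have hpos : 0 < c z q.snd := (hc0 _ _).lt_of_ne ((hadj _ _).mp hzu).symm
    exact (hpos.trans_le (single_le_sum (fun u _ => hc0 z u) (mem_univ _))).ne'
  have hbb : c b b = 0 := by
    by_contra hbb
    exact G.irrefl ((hadj b b).mpr hbb)
  have hflow := mul_sub_add_eq_sum_sum_insert_of_cut hsym hbb ((hmem a).mpr ha) hbA hcut
    fun z hz => sum_mul_sub_eq_sum_of_eq_one_add c (hdeg z hz)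
      (hrec z fun hzy => hyA (hzy ▸ hz))
  have hside :
      univ.filter (fun w => w = b ∨ ∃ q : G.Walk x w, b ∉ q.support) = insert b A := by
    ext w
    simp [A]
  rw [Finset.sum_sum_ite_and (fun w => w = b ∨ ∃ q : G.Walk x w, b ∉ q.support), hside,
    ← hflow]
  field_simp [(hadj a b).mp hab]
  ring

theorem claim_tree_formula_general {S : Type*} [Fintype S] [DecidableEq S]
    (G : SimpleGraph S) (hG : G.IsTree)
    (c : S → S → ℝ) (hsym : ∀ x y, c x y = c y x) (hc0 : ∀ x y, 0 ≤ c x y)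
    (hadj : ∀ x y, G.Adj x y ↔ c x y ≠ 0)
    (x y : S) (p : G.Walk x y) (hp : p.IsPath)
    (h : S → ℝ)
    (hhy : h y = 0)
    (hrec : ∀ z, z ≠ y → h z = 1 + ∑ w, (c z w / ∑ u, c z u) * h w) :
    h x = ∑ i ∈ Finset.range p.length,
      ((∑ w, ∑ z,
          if ((w = p.getVert (i + 1) ∨ ∃ q : G.Walk x w, p.getVert (i + 1) ∉ q.support)
            ∧ (z = p.getVert (i + 1) ∨ ∃ q : G.Walk x z, p.getVert (i + 1) ∉ q.support))
          then c w z else 0)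
        / c (p.getVert i) (p.getVert (i + 1)) - 1) := by
  have htelescope : ∑ i ∈ range p.length, (h (p.getVert i) - h (p.getVert (i + 1))) = h x := by
    rw [sum_range_sub', SimpleGraph.Walk.getVert_zero, SimpleGraph.Walk.getVert_length, hhy,
      sub_zero]
  rw [← htelescope]
  refine sum_congr rfl fun i hi => ?_
  have hi : i < p.length := mem_range.mp hi
  exact hG.sub_eq_of_hitting_eq hsym hc0 hadj (p.adj_getVert_succ hi)
    (hp.exists_walk_getVert_notMem_support hi)
    (fun q => hG.isAcyclic.support_subset_support_of_isPath hp q (p.getVert_mem_support _)) hrec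

/-- expected hitting time on a weighted tree: let `T` be a finite tree
with positive edge conductances `c`, `x, y` vertices, and `v_0 = x, …, v_n = y` the
unique path joining them (`v_i = p.getVert i` for the path `p`).  With
`T_x(v_{i+1})` the union of `{v_{i+1}}` and the component of `T − {v_{i+1}}`
containing `x`, and `C_i = ∑_{w,z ∈ T_x(v_{i+1})} c(w,z)`, the expected hitting time
satisfies `E_x[τ_y] = ∑_{i<n} (C_i / c(v_i, v_{i+1}) − 1)`.  The expected hitting
times `h z = E_z[τ_y]` are characterized by the usual hitting-time equations. -/
theorem claim_tree_formula {S : Type*} [Fintype S] [DecidableEq S] [Nonempty S]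
    (G : SimpleGraph S) (hG : G.IsTree)
    (c : S → S → ℝ) (hsym : ∀ x y, c x y = c y x) (hc0 : ∀ x y, 0 ≤ c x y)
    (hadj : ∀ x y, G.Adj x y ↔ c x y ≠ 0)
    (x y : S) (p : G.Walk x y) (hp : p.IsPath)
    (h : S → ℝ)
    (hhy : h y = 0)
    (hrec : ∀ z, z ≠ y → h z = 1 + ∑ w, (c z w / ∑ u, c z u) * h w) :
    h x = ∑ i ∈ Finset.range p.length,
      ((∑ w, ∑ z,
          if ((w = p.getVert (i + 1) ∨ ∃ q : G.Walk x w, p.getVert (i + 1) ∉ q.support)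
            ∧ (z = p.getVert (i + 1) ∨ ∃ q : G.Walk x z, p.getVert (i + 1) ∉ q.support))
          then c w z else 0)
        / c (p.getVert i) (p.getVert (i + 1)) - 1) :=
  claim_tree_formula_general G hG c hsym hc0 hadj x y p hp h hhy hrec
end
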